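/- arXiv:1912.04666 — 11 statements merged into one kernel-verified Lean document; each statement's English description precedes it below -/
import Mathlib

section
/- Let φ : B_b(S) → ℝ be a monetary risk measure on the bounded Borel measurable functions with acceptance set A. Then φ is max-stable if and only if the following holds: for all f ∈ B_b(S), whenever there exist c ∈ ℝ and a Borel set B such that f·1_B + c·1_{B^c} ∈ A and f·1_{B^c} + c·1_B ∈ A, then f ∈ A. -/
open MeasureTheory Set Metric Filter Topology

noncomputable section

/-- The bounded Borel measurable functions on `S`. -/
def Bb (S : Type*) [MeasurableSpace S] : Set (S → ℝ) :=
  {f | Measurable f ∧ ∃ C : ℝ, ∀ x, |f x| ≤ C}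

/-- `φ` is a monetary risk measure on the class of functions `X`:
normalization, translation property and monotonicity. -/
def Monetary {S : Type*} (X : Set (S → ℝ)) (φ : (S → ℝ) → ℝ) : Prop :=
  φ 0 = 0 ∧
  (∀ f ∈ X, ∀ c : ℝ, φ (f + fun _ => c) = φ f + c) ∧
  (∀ f ∈ X, ∀ g ∈ X, (∀ x, f x ≤ g x) → φ f ≤ φ g)

/-- `φ` is max-stable on `X`. -/
def MaxStable {S : Type*} (X : Set (S → ℝ)) (φ : (S → ℝ) → ℝ) : Prop :=
  ∀ f ∈ X, ∀ g ∈ X, φ (f ⊔ g) ≤ max (φ f) (φ g)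

/-- The concentration function `J_A = inf_{r ∈ ℝ} φ(r · 1_{Aᶜ})`. -/
def conc {S : Type*} (φ : (S → ℝ) → ℝ) (A : Set S) : EReal :=
  ⨅ r : ℝ, (φ (Aᶜ.indicator fun _ => r) : EReal)

/-- The minimal rate function `I_min(x) = sup_{f ∈ C_b(S)} (f(x) - φ(f))`,
with values in `[0, +∞] ⊆ EReal`. -/
def IminE {S : Type*} [TopologicalSpace S] (φ : (S → ℝ) → ℝ) (x : S) : EReal :=
  ⨆ f : BoundedContinuousFunction S ℝ, ((f x - φ ⇑f : ℝ) : EReal)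

lemma indSum_apply_mem {S : Type*} {f : S → ℝ} {B : Set S} {c : ℝ} {x : S} (hx : x ∈ B) :
    (B.indicator f + Bᶜ.indicator fun _ => c) x = f x := by
  have h1 : x ∉ Bᶜ := fun h => h hx
  rw [Pi.add_apply, Set.indicator_of_mem hx, Set.indicator_of_notMem h1, add_zero]

lemma indSum_apply_notMem {S : Type*} {f : S → ℝ} {B : Set S} {c : ℝ} {x : S} (hx : x ∉ B) :
    (B.indicator f + Bᶜ.indicator fun _ => c) x = c := by
  have h1 : x ∈ Bᶜ := hx
  rw [Pi.add_apply, Set.indicator_of_notMem hx, Set.indicator_of_mem h1, zero_add]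

lemma indSum_mem_Bb {S : Type*} [MeasurableSpace S] {f : S → ℝ} {B : Set S}
    (hB : MeasurableSet B) (hf : f ∈ Bb S) (c : ℝ) :
    (B.indicator f + Bᶜ.indicator fun _ => c) ∈ Bb S := by
  obtain ⟨hm, C, hC⟩ := hf
  refine ⟨(hm.indicator hB).add (measurable_const.indicator hB.compl), max C |c|, fun x => ?_⟩
  by_cases hx : x ∈ B
  · rw [indSum_apply_mem hx]; exact le_max_of_le_left (hC x)
  · rw [indSum_apply_notMem hx]; exact le_max_of_le_right le_rfl

theorem stmt1 {S : Type*} [MetricSpace S] [MeasurableSpace S] [BorelSpace S]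
    (φ : (S → ℝ) → ℝ) (hmon : Monetary (Bb S) φ) :
    MaxStable (Bb S) φ ↔
      ∀ f ∈ Bb S,
        (∃ (c : ℝ) (B : Set S), MeasurableSet B ∧
            φ (B.indicator f + Bᶜ.indicator fun _ => c) ≤ 0 ∧
            φ (Bᶜ.indicator f + B.indicator fun _ => c) ≤ 0) →
          φ f ≤ 0 := by
  obtain ⟨hz, htr, hmono⟩ := hmon
  constructor
  · rintro hms f hf ⟨c, B, hB, h1, h2⟩
    set g := B.indicator f + Bᶜ.indicator fun _ => c with hgdef
    set h := Bᶜ.indicator f + B.indicator fun _ => c with hhdef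
    have hgB : g ∈ Bb S := indSum_mem_Bb hB hf c
    have hhB : h ∈ Bb S := by
      have := indSum_mem_Bb hB.compl hf c
      rw [compl_compl] at this
      exact this
    have hghB : g ⊔ h ∈ Bb S := by
      obtain ⟨hmg, Cg, hCg⟩ := hgB
      obtain ⟨hmh, Ch, hCh⟩ := hhB
      refine ⟨hmg.sup hmh, max Cg Ch, fun x => ?_⟩
      have hx : (g ⊔ h) x = max (g x) (h x) := rfl
      rw [hx]
      rcases le_total (g x) (h x) with hle | hle
      · rw [max_eq_right hle]; exact le_max_of_le_right (hCh x)
      · rw [max_eq_left hle]; exact le_max_of_le_left (hCg x)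
    have hle : ∀ x, f x ≤ (g ⊔ h) x := by
      intro x
      by_cases hx : x ∈ B
      · have hgx : g x = f x := indSum_apply_mem hx
        calc f x = g x := hgx.symm
          _ ≤ (g ⊔ h) x := le_max_left _ _
      · have hhx : h x = f x := by
          rw [hhdef, Pi.add_apply, Set.indicator_of_mem (show x ∈ Bᶜ from hx),
            Set.indicator_of_notMem hx, add_zero]
        calc f x = h x := hhx.symm
          _ ≤ (g ⊔ h) x := le_max_right _ _
    calc φ f ≤ φ (g ⊔ h) := hmono f hf _ hghB hle
      _ ≤ max (φ g) (φ h) := hms g hgB h hhB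
      _ ≤ 0 := max_le h1 h2
  · intro H f hf g hg
    obtain ⟨hmf, Cf, hCf⟩ := hf
    obtain ⟨hmg, Cg, hCg⟩ := hg
    set m := max (φ f) (φ g) with hm
    set c := -(max Cf Cg + |m| + 1) with hc
    set B := {x | g x ≤ f x} with hBdef
    have hB : MeasurableSet B := measurableSet_le hmg hmf
    set F := f ⊔ g + fun _ => -m with hFdef
    have hFx : ∀ x, F x = max (f x) (g x) - m := by
      intro x
      show max (f x) (g x) + -m = max (f x) (g x) - m
      ring
    have hFBb : F ∈ Bb S := by
      refine ⟨(hmf.sup hmg).add measurable_const, max Cf Cg + |m|, fun x => ?_⟩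
      rw [hFx]
      have h1 : |max (f x) (g x)| ≤ max Cf Cg := by
        rcases le_total (f x) (g x) with hle | hle
        · rw [max_eq_right hle]; exact le_max_of_le_right (hCg x)
        · rw [max_eq_left hle]; exact le_max_of_le_left (hCf x)
      calc |max (f x) (g x) - m| ≤ |max (f x) (g x)| + |m| := abs_sub _ _
        _ ≤ max Cf Cg + |m| := by linarith
    have hfm : (f + fun _ => -m) ∈ Bb S := by
      refine ⟨hmf.add measurable_const, Cf + |m|, fun x => ?_⟩
      calc |f x + -m| ≤ |f x| + |(-m)| := abs_add_le _ _
        _ = |f x| + |m| := by rw [abs_neg]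
        _ ≤ Cf + |m| := by linarith [hCf x]
    have hgm : (g + fun _ => -m) ∈ Bb S := by
      refine ⟨hmg.add measurable_const, Cg + |m|, fun x => ?_⟩
      calc |g x + -m| ≤ |g x| + |(-m)| := abs_add_le _ _
        _ = |g x| + |m| := by rw [abs_neg]
        _ ≤ Cg + |m| := by linarith [hCg x]
    have key : φ F ≤ 0 := by
      refine H F hFBb ⟨c, B, hB, ?_, ?_⟩
      · have hle : ∀ x, (B.indicator F + Bᶜ.indicator fun _ => c) x ≤ f x + -m := by
          intro x
          by_cases hx : x ∈ B
          · rw [indSum_apply_mem hx, hFx]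
            have hgf : g x ≤ f x := hx
            rw [max_eq_left hgf, sub_eq_add_neg]
          · rw [indSum_apply_notMem hx, hc]
            have hf1 : -Cf ≤ f x := neg_le_of_abs_le (hCf x)
            have h1 : m ≤ |m| := le_abs_self m
            have h2 : Cf ≤ max Cf Cg := le_max_left _ _
            linarith
        calc φ (B.indicator F + Bᶜ.indicator fun _ => c)
            ≤ φ (f + fun _ => -m) := hmono _ (indSum_mem_Bb hB hFBb c) _ hfm hle
          _ = φ f + -m := htr f ⟨hmf, Cf, hCf⟩ (-m)
          _ ≤ 0 := by have h3 : φ f ≤ m := le_max_left _ _; linarith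
      · have hle : ∀ x, (Bᶜ.indicator F + B.indicator fun _ => c) x ≤ g x + -m := by
          intro x
          by_cases hx : x ∈ B
          · have hx' : x ∉ Bᶜ := fun h => h hx
            have heq : (Bᶜ.indicator F + B.indicator fun _ => c) x = c := by
              rw [Pi.add_apply, Set.indicator_of_notMem hx', Set.indicator_of_mem hx, zero_add]
            rw [heq, hc]
            have hg1 : -Cg ≤ g x := neg_le_of_abs_le (hCg x)
            have h1 : m ≤ |m| := le_abs_self m
            have h2 : Cg ≤ max Cf Cg := le_max_right _ _
            linarith
          · have hx' : x ∈ Bᶜ := hx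
            have heq : (Bᶜ.indicator F + B.indicator fun _ => c) x = F x := by
              rw [Pi.add_apply, Set.indicator_of_mem hx', Set.indicator_of_notMem hx, add_zero]
            rw [heq, hFx]
            have hfg : f x ≤ g x := le_of_not_ge hx
            rw [max_eq_right hfg, sub_eq_add_neg]
        have hmem : (Bᶜ.indicator F + B.indicator fun _ => c) ∈ Bb S := by
          have := indSum_mem_Bb hB.compl hFBb c
          rw [compl_compl] at this
          exact this
        calc φ (Bᶜ.indicator F + B.indicator fun _ => c)
            ≤ φ (g + fun _ => -m) := hmono _ hmem _ hgm hle
          _ = φ g + -m := htr g ⟨hmg, Cg, hCg⟩ (-m)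
          _ ≤ 0 := by have h3 : φ g ≤ m := le_max_right _ _; linarith
    have heq : F + (fun _ => m) = f ⊔ g := by
      funext x
      show F x + m = max (f x) (g x)
      rw [hFx]; ring
    have htrF := htr F hFBb m
    rw [heq] at htrF
    rw [htrF]
    linarith
end
end

section
/- Every max-stable monetary risk measure φ : X → ℝ is convex: φ(λf + (1−λ)g) ≤ λφ(f) + (1−λ)φ(g) for all f, g ∈ X and λ ∈ [0,1]. -/
open MeasureTheory Set Metric Filter Topology

noncomputable section

theorem stmt2 {S : Type*} (X : Set (S → ℝ))
    (hconst : ∀ c : ℝ, (fun _ => c) ∈ X)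
    (hadd : ∀ f ∈ X, ∀ g ∈ X, f + g ∈ X)
    (hsmul : ∀ (a : ℝ), ∀ f ∈ X, a • f ∈ X)
    (hmax : ∀ f ∈ X, ∀ g ∈ X, f ⊔ g ∈ X)
    (φ : (S → ℝ) → ℝ) (hmon : Monetary X φ) (hms : MaxStable X φ) :
    ∀ f ∈ X, ∀ g ∈ X, ∀ l : ℝ, 0 ≤ l → l ≤ 1 →
      φ (l • f + (1 - l) • g) ≤ l * φ f + (1 - l) * φ g := by
  obtain ⟨h0, htr, hmono⟩ := hmon
  intro f hf g hg l hl0 hl1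
  set a := φ f with ha
  set b := φ g with hb
  set f' : S → ℝ := f + fun _ => -a with hf'
  set g' : S → ℝ := g + fun _ => -b with hg'
  have hf'X : f' ∈ X := hadd f hf _ (hconst (-a))
  have hg'X : g' ∈ X := hadd g hg _ (hconst (-b))
  have hφf' : φ f' = 0 := by rw [hf', htr f hf (-a)]; ring
  have hφg' : φ g' = 0 := by rw [hg', htr g hg (-b)]; ring
  set h : S → ℝ := f' ⊔ g' with hh
  have hhX : h ∈ X := hmax f' hf'X g' hg'X
  have hφh : φ h ≤ 0 := by
    have := hms f' hf'X g' hg'X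
    rwa [hφf', hφg', max_self] at this
  set c : ℝ := l * a + (1 - l) * b with hc
  have hle : ∀ x, (l • f + (1 - l) • g) x ≤ h x + c := by
    intro x
    have h1 : l * (f x - a) ≤ l * max (f x - a) (g x - b) :=
      mul_le_mul_of_nonneg_left (le_max_left _ _) hl0
    have h2 : (1 - l) * (g x - b) ≤ (1 - l) * max (f x - a) (g x - b) :=
      mul_le_mul_of_nonneg_left (le_max_right _ _) (by linarith)
    have hmaxeq : h x = max (f x - a) (g x - b) := by
      simp [hh, hf', hg', Pi.sup_apply]
      ring_nf
    simp only [Pi.add_apply, Pi.smul_apply, smul_eq_mul, hmaxeq, hc]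
    nlinarith [h1, h2, le_max_left (f x - a) (g x - b), le_max_right (f x - a) (g x - b)]
  have hXlhs : l • f + (1 - l) • g ∈ X :=
    hadd _ (hsmul l f hf) _ (hsmul (1 - l) g hg)
  have hXrhs : h + (fun _ => c) ∈ X := hadd h hhX _ (hconst c)
  calc φ (l • f + (1 - l) • g) ≤ φ (h + fun _ => c) := hmono _ hXlhs _ hXrhs (fun x => by simpa using hle x)
    _ = φ h + c := htr h hhX c
    _ ≤ l * a + (1 - l) * b := by linarith
end
end

section
/- Let φ : C_b(S) → ℝ be a max-stable monetary risk measure, S a separable metric space, and μ a Borel probability measure on S. Let A = {f ∈ C_b(S) : φ(f) ≤ 0} and I_min(x) := sup_{f ∈ A} f(x). Then the μ-essential supremum of the family A equals I_min μ-almost surely. -/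
open MeasureTheory Set Metric Filter Topology

noncomputable section

theorem stmt4 {S : Type*} [MetricSpace S] [TopologicalSpace.SeparableSpace S]
    [MeasurableSpace S] [BorelSpace S]
    (μ : Measure S) [IsProbabilityMeasure μ]
    (φ : BoundedContinuousFunction S ℝ → ℝ)
    (hN : φ 0 = 0)
    (hT : ∀ (f : BoundedContinuousFunction S ℝ) (c : ℝ),
      φ (f + BoundedContinuousFunction.const S c) = φ f + c)
    (hM : ∀ f g : BoundedContinuousFunction S ℝ, f ≤ g → φ f ≤ φ g)
    (hms : ∀ f g : BoundedContinuousFunction S ℝ, φ (f ⊔ g) ≤ max (φ f) (φ g)) :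
    -- `I_min(x) = sup_{f ∈ A} f(x)` is a version of the `μ`-essential supremum
    -- of the acceptance set `A = {f : φ(f) ≤ 0}`, i.e. `ess.sup_μ A = I_min` `μ`-a.s.:
    (∀ f : BoundedContinuousFunction S ℝ, φ f ≤ 0 →
      ∀ᵐ x ∂μ, ((f x : ℝ) : EReal) ≤
        ⨆ g : {g : BoundedContinuousFunction S ℝ // φ g ≤ 0},
          (((g : BoundedContinuousFunction S ℝ) x : ℝ) : EReal)) ∧
    (∀ ξ : S → EReal, Measurable ξ →
      (∀ f : BoundedContinuousFunction S ℝ, φ f ≤ 0 →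
        ∀ᵐ x ∂μ, ((f x : ℝ) : EReal) ≤ ξ x) →
      ∀ᵐ x ∂μ,
        (⨆ g : {g : BoundedContinuousFunction S ℝ // φ g ≤ 0},
          (((g : BoundedContinuousFunction S ℝ) x : ℝ) : EReal)) ≤ ξ x) := by
  have : SecondCountableTopology S :=
    UniformSpace.secondCountable_of_separable S
  constructor
  · intro f hf
    filter_upwards with x
    exact le_iSup (fun g : {g : BoundedContinuousFunction S ℝ // φ g ≤ 0} =>
      (((g : BoundedContinuousFunction S ℝ) x : ℝ) : EReal)) ⟨f, hf⟩
  · intro ξ _ h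
    set ι := {g : BoundedContinuousFunction S ℝ // φ g ≤ 0} with hι
    have hT : ∀ q : ℚ, ∃ T : Set ι, T.Countable ∧
        ⋃ g ∈ T, {x : S | (q : ℝ) < (g : BoundedContinuousFunction S ℝ) x}
          = ⋃ g : ι, {x : S | (q : ℝ) < (g : BoundedContinuousFunction S ℝ) x} :=
      fun q => TopologicalSpace.isOpen_iUnion_countable _
        (fun g => isOpen_lt continuous_const
          (g : BoundedContinuousFunction S ℝ).continuous)
    choose T hTc hTU using hT
    have hae : ∀ᵐ x ∂μ, ∀ q : ℚ, ∀ g ∈ T q,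
        (((g : BoundedContinuousFunction S ℝ) x : ℝ) : EReal) ≤ ξ x := by
      rw [ae_all_iff]
      intro q
      rw [ae_ball_iff (hTc q)]
      intro g _
      exact h g g.2
    filter_upwards [hae] with x hx
    refine iSup_le fun g => ?_
    by_contra hlt
    push_neg at hlt
    obtain ⟨q, hq1, hq2⟩ := EReal.exists_rat_btwn_of_lt hlt
    have hxmem : x ∈ ⋃ g' : ι, {x : S | (q : ℝ) < (g' : BoundedContinuousFunction S ℝ) x} :=
      mem_iUnion.2 ⟨g, by exact_mod_cast hq2⟩
    rw [← hTU q] at hxmem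
    obtain ⟨g', hg'T, hg'x⟩ := mem_iUnion₂.1 hxmem
    have : ((q : ℝ) : EReal) < ξ x :=
      lt_of_lt_of_le (by exact_mod_cast hg'x) (hx q g' hg'T)
    exact absurd hq1 (not_lt.2 this.le)
end
end

section
/- Let S be a separable metric space and φ : C_b(S) → ℝ a monetary risk measure continuous from above. If φ is max-stable, then φ admits the representation φ(f) = max_{x ∈ S} { f(x) − I_min(x) } for all f ∈ C_b(S), where I_min(x) = sup_{f ∈ C_b(S)} { f(x) − φ(f) }. Conversely, if the acceptance set A of φ is of the form A = {f ∈ C_b(S) : f ≤ γ} for some function γ : S → (−∞, +∞], then φ is max-stable. -/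
/-!
Say that `φ f` is at least `m` on `C` (`RiskGEOn φ f C m`) if `m ≤ φ g` for every `g`
dominating `f` on `C`. By max-stability this property passes from a finite union to one of
its pieces, and by continuity from above it behaves like compactness: for `m > 0`, nested
closed sets carrying it have a common point. So a closed set carrying `m` is covered, with no
loss in `m`, by finitely many balls of a given radius around a dense sequence, and iterating
with shrinking radii yields a point `x` with `RiskGEOn φ f (closedBall x ρ) (φ f)` for all
`ρ > 0`. Letting `ρ → 0`, continuity of `f - g` gives `g x - φ g ≤ f x - φ f` for every `g`,
that is, `I_min x = f x - φ f`.
-/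

open MeasureTheory Set Metric Filter Topology

noncomputable section

open BoundedContinuousFunction NNReal

namespace RiskMeasure

variable {S : Type*} [MetricSpace S] {φ : (S →ᵇ ℝ) → ℝ} {f : S →ᵇ ℝ} {m : ℝ}

def CashAdditive (φ : (S →ᵇ ℝ) → ℝ) : Prop :=
  ∀ (f : S →ᵇ ℝ) (c : ℝ), φ (f + const S c) = φ f + c

def IsMaxStable (φ : (S →ᵇ ℝ) → ℝ) : Prop :=
  ∀ f g : S →ᵇ ℝ, φ (f ⊔ g) ≤ max (φ f) (φ g)

def ContinuousFromAbove (φ : (S →ᵇ ℝ) → ℝ) : Prop :=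
  ∀ u : ℕ → S →ᵇ ℝ, (∀ n, u (n + 1) ≤ u n) →
    (∀ x, Tendsto (fun n => u n x) atTop (𝓝 0)) → Tendsto (fun n => φ (u n)) atTop (𝓝 0)

def RiskGEOn (φ : (S →ᵇ ℝ) → ℝ) (f : S →ᵇ ℝ) (C : Set S) (m : ℝ) : Prop :=
  ∀ g : S →ᵇ ℝ, (∀ x ∈ C, f x ≤ g x) → m ≤ φ g

lemma riskGEOn_univ (hM : Monotone φ) (f : S →ᵇ ℝ) : RiskGEOn φ f univ (φ f) :=
  fun _ hg => hM fun x => hg x (mem_univ x)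

namespace RiskGEOn

variable {C D : Set S}

lemma mono (h : RiskGEOn φ f C m) (hCD : C ⊆ D) : RiskGEOn φ f D m :=
  fun g hg => h g fun x hx => hg x (hCD hx)

lemma nonempty (hT : CashAdditive φ) (h : RiskGEOn φ f C m) : C.Nonempty := by
  by_contra hC
  rw [not_nonempty_iff_eq_empty] at hC
  have := h (f + const S (m - 1 - φ f)) (by simp [hC])
  rw [hT] at this
  linarith

lemma union (hms : IsMaxStable φ) (h : RiskGEOn φ f (C ∪ D) m) :
    RiskGEOn φ f C m ∨ RiskGEOn φ f D m := by
  by_contra! hCD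
  simp only [RiskGEOn, not_forall, not_le, exists_prop] at hCD
  obtain ⟨⟨g₁, hg₁, hφg₁⟩, ⟨g₂, hg₂, hφg₂⟩⟩ := hCD
  have hsup : ∀ x ∈ C ∪ D, f x ≤ (g₁ ⊔ g₂) x := by
    rintro x (hx | hx)
    · exact (hg₁ x hx).trans (le_sup_left (a := g₁ x))
    · exact (hg₂ x hx).trans (le_sup_right (b := g₂ x))
  exact (h _ hsup).not_gt ((hms g₁ g₂).trans_lt (max_lt hφg₁ hφg₂))

lemma exists_of_biUnion {ι : Type*} [DecidableEq ι] (hT : CashAdditive φ)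
    (hms : IsMaxStable φ) {A : ι → Set S} {s : Finset ι} (h : RiskGEOn φ f (⋃ k ∈ s, A k) m) :
    ∃ k ∈ s, RiskGEOn φ f (A k) m := by
  induction s using Finset.induction_on with
  | empty => simpa using h.nonempty hT
  | insert a s _ ih =>
    rw [Finset.set_biUnion_insert] at h
    rcases h.union hms with ha | hs
    · exact ⟨a, Finset.mem_insert_self a s, ha⟩
    · obtain ⟨k, hk, hAk⟩ := ih hs
      exact ⟨k, Finset.mem_insert_of_mem hk, hAk⟩

end RiskGEOn

lemma nonempty_iInter_of_riskGEOn (hca : ContinuousFromAbove φ) {D : ℕ → Set S}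
    (hD : ∀ n, IsClosed (D n)) (hanti : Antitone D) (hm : 0 < m)
    (h : ∀ n, RiskGEOn φ f (D n) m) : (⋂ n, D n).Nonempty := by
  by_contra hempty
  rw [not_nonempty_iff_eq_empty] at hempty
  have hδ : ∀ n : ℕ, (0 : ℝ) < 1 / (n + 1) := fun n => Nat.one_div_pos_of_nat
  -- `u n` equals `‖f‖` on `D n`, and decreases pointwise to `0` since `⋂ n, D n = ∅`.
  let u : ℕ → S →ᵇ ℝ := fun n =>
    ‖f‖ • (thickenedIndicator (hδ n) (D n)).comp ((↑) : ℝ≥0 → ℝ)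
      isometry_subtype_coe.lipschitz
  have hu : ∀ n x, u n x = ‖f‖ * thickenedIndicator (hδ n) (D n) x := fun _ _ => rfl
  have hu_anti : ∀ n, u (n + 1) ≤ u n := by
    intro n x
    change u (n + 1) x ≤ u n x
    rw [hu, hu]
    gcongr
    calc thickenedIndicator (hδ (n + 1)) (D (n + 1)) x
        ≤ thickenedIndicator (hδ (n + 1)) (D n) x :=
          thickenedIndicator_subset _ (hanti n.le_succ) x
      _ ≤ thickenedIndicator (hδ n) (D n) x :=
          thickenedIndicator_mono _ _ (by gcongr; simp) _ x
  have hu_lim : ∀ x, Tendsto (fun n => u n x) atTop (𝓝 0) := by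
    intro x
    obtain ⟨k, hk⟩ : ∃ k, x ∉ D k := by
      simpa using (hempty ▸ notMem_empty x : x ∉ ⋂ n, D n)
    have hfar : ∀ᶠ n : ℕ in atTop, x ∉ thickening (1 / (n + 1)) (D k) :=
      tendsto_one_div_add_atTop_nhds_zero_nat.eventually
        (eventually_notMem_thickening_of_infEDist_pos (by rwa [(hD k).closure_eq]))
    refine tendsto_const_nhds.congr' ?_
    filter_upwards [hfar, eventually_ge_atTop k] with n hn hkn
    rw [hu, thickenedIndicator_zero _ _ fun hx =>
      hn (thickening_subset_of_subset _ (hanti hkn) hx)]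
    simp
  have hu_ge : ∀ n, m ≤ φ (u n) := fun n => h n _ fun x hx => by
    rw [hu, thickenedIndicator_one _ _ hx]
    simpa using (le_abs_self (f x)).trans (f.norm_coe_le_norm x)
  exact hm.not_ge (ge_of_tendsto' (hca u hu_anti hu_lim) hu_ge)

namespace RiskGEOn

variable {C : Set S}

lemma exists_inter_of_subset_iUnion (hT : CashAdditive φ) (hms : IsMaxStable φ)
    (hca : ContinuousFromAbove φ) (hC : IsClosed C) {U : ℕ → Set S} (hU : ∀ k, IsOpen (U k))
    (hCU : C ⊆ ⋃ k, U k) (hm : 0 < m) (h : RiskGEOn φ f C m) :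
    ∃ k, RiskGEOn φ f (C ∩ U k) m := by
  classical
  -- continuity from above: some `F N`, the part of `C` missed by `U 0, …, U (N-1)`, fails `m`
  let F : ℕ → Set S := fun N => C \ ⋃ k ∈ Finset.range N, U k
  have hF_closed : ∀ N, IsClosed (F N) := fun N =>
    hC.sdiff (isOpen_biUnion fun k _ => hU k)
  have hF_anti : Antitone F := fun N N' hN =>
    sdiff_subset_sdiff_right (biUnion_subset_biUnion_left (by simpa using hN))
  have hF_empty : ⋂ N, F N = ∅ := by
    refine eq_empty_of_forall_notMem fun x hx => ?_
    obtain ⟨k, hk⟩ := mem_iUnion.1 (hCU (mem_iInter.1 hx 0).1)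
    exact (mem_iInter.1 hx (k + 1)).2 (mem_biUnion (by simp) hk)
  obtain ⟨N, hN⟩ : ∃ N, ¬ RiskGEOn φ f (F N) m := by
    by_contra! hall
    simpa [hF_empty] using nonempty_iInter_of_riskGEOn hca hF_closed hF_anti hm hall
  have hcover : C ⊆ F N ∪ ⋃ k ∈ Finset.range N, C ∩ U k := fun x hx => by
    by_cases hxU : x ∈ ⋃ k ∈ Finset.range N, U k
    · obtain ⟨k, hk, hxk⟩ := mem_iUnion₂.1 hxU
      exact Or.inr (mem_biUnion hk ⟨hx, hxk⟩)
    · exact Or.inl ⟨hx, hxU⟩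
  obtain ⟨k, -, hk⟩ :=
    ((h.mono hcover).union hms).resolve_left hN |>.exists_of_biUnion hT hms
  exact ⟨k, hk⟩

lemma exists_inter_closedBall [TopologicalSpace.SeparableSpace S] (hT : CashAdditive φ)
    (hms : IsMaxStable φ) (hca : ContinuousFromAbove φ) (hC : IsClosed C) (hm : 0 < m)
    (h : RiskGEOn φ f C m) {r : ℝ} (hr : 0 < r) :
    ∃ z, RiskGEOn φ f (C ∩ closedBall z r) m := by
  obtain ⟨x₀, -⟩ := h.nonempty hT
  have : Nonempty S := ⟨x₀⟩
  have hcover : C ⊆ ⋃ k, ball (TopologicalSpace.denseSeq S k) r := fun x _ =>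
    mem_iUnion.2 <| by
      simpa [dist_comm] using (TopologicalSpace.denseRange_denseSeq S).exists_dist_lt x hr
  obtain ⟨k, hk⟩ :=
    h.exists_inter_of_subset_iUnion hT hms hca hC (fun _ => isOpen_ball) hcover hm
  exact ⟨_, hk.mono (inter_subset_inter_right C ball_subset_closedBall)⟩

lemma exists_mem_forall_closedBall [TopologicalSpace.SeparableSpace S] (hT : CashAdditive φ)
    (hms : IsMaxStable φ) (hca : ContinuousFromAbove φ) (hC : IsClosed C) (hm : 0 < m)
    (h : RiskGEOn φ f C m) :
    ∃ x ∈ C, ∀ ρ > 0, RiskGEOn φ f (closedBall x ρ) m := by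
  obtain ⟨x₀, -⟩ := h.nonempty hT
  have : Nonempty S := ⟨x₀⟩
  choose! z hz using fun (n : ℕ) (D : Set S) (hD : IsClosed D ∧ RiskGEOn φ f D m) =>
    hD.2.exists_inter_closedBall hT hms hca hD.1 hm (Nat.one_div_pos_of_nat (n := n))
  let D : ℕ → Set S := fun n =>
    Nat.rec C (fun n D => D ∩ closedBall (z n D) (1 / (n + 1))) n
  have hD : ∀ n, IsClosed (D n) ∧ RiskGEOn φ f (D n) m := by
    intro n
    induction n with
    | zero => exact ⟨hC, h⟩
    | succ n ih => exact ⟨ih.1.inter isClosed_closedBall, hz n (D n) ih⟩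
  obtain ⟨x, hx⟩ := nonempty_iInter_of_riskGEOn hca (fun n => (hD n).1)
    (antitone_nat_of_succ_le fun n => inter_subset_left) hm (fun n => (hD n).2)
  refine ⟨x, mem_iInter.1 hx 0, fun ρ hρ => ?_⟩
  obtain ⟨n, hn⟩ := exists_nat_one_div_lt (half_pos hρ)
  refine (hD (n + 1)).2.mono fun y (hy : y ∈ D n ∩ closedBall (z n (D n)) _) => ?_
  have hx' : x ∈ D n ∩ closedBall (z n (D n)) _ := mem_iInter.1 hx (n + 1)
  calc dist y x ≤ dist y (z n (D n)) + dist x (z n (D n)) := dist_triangle_right _ _ _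
    _ ≤ 1 / (n + 1) + 1 / (n + 1) := add_le_add hy.2 hx'.2
    _ ≤ ρ := by linarith

end RiskGEOn

lemma sub_le_of_forall_riskGEOn_closedBall (hT : CashAdditive φ) {x : S}
    (h : ∀ ρ > 0, RiskGEOn φ f (closedBall x ρ) m) (g : S →ᵇ ℝ) : g x - φ g ≤ f x - m := by
  refine le_of_forall_pos_le_add fun η hη => ?_
  have hnear : {y | f y - g y < f x - g x + η} ∈ 𝓝 x :=
    (f - g).continuous.continuousAt (Iio_mem_nhds (lt_add_of_pos_right _ hη))
  obtain ⟨ρ, hρ, hball⟩ := nhds_basis_closedBall.mem_iff.1 hnear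
  have := h ρ hρ (g + const S (f x - g x + η)) fun y hy => by
    have := hball hy
    simp only [mem_ofPred_eq] at this
    simp only [coe_add, Pi.add_apply, const_apply]
    linarith
  rw [hT] at this
  linarith

theorem exists_forall_sub_le [TopologicalSpace.SeparableSpace S] (hT : CashAdditive φ)
    (hM : Monotone φ) (hms : IsMaxStable φ) (hca : ContinuousFromAbove φ) (f : S →ᵇ ℝ) :
    ∃ x, ∀ g : S →ᵇ ℝ, g x - φ g ≤ f x - φ f := by
  -- shift `f` so that `φ F > 0`, as `nonempty_iInter_of_riskGEOn` needs
  set F := f + const S (1 - φ f)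
  have hF : φ F = 1 := by rw [hT]; ring
  obtain ⟨x, -, hx⟩ := (riskGEOn_univ hM F).exists_mem_forall_closedBall hT hms hca
    isClosed_univ (hF ▸ one_pos)
  refine ⟨x, fun g => (sub_le_of_forall_riskGEOn_closedBall hT hx g).trans_eq ?_⟩
  simp only [F, hF, coe_add, Pi.add_apply, const_apply]
  ring

theorem isMaxStable_of_acceptance_eq (hT : CashAdditive φ) {γ : S → EReal}
    (hγ : ∀ f : S →ᵇ ℝ, φ f ≤ 0 ↔ ∀ x, ((f x : ℝ) : EReal) ≤ γ x) : IsMaxStable φ := by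
  intro f g
  set m := max (φ f) (φ g)
  have accepted : ∀ h : S →ᵇ ℝ, φ h ≤ m → ∀ x, ((h x + -m : ℝ) : EReal) ≤ γ x :=
    fun h hh => by simpa using (hγ (h + const S (-m))).1 (by rw [hT]; linarith)
  have : φ ((f ⊔ g) + const S (-m)) ≤ 0 := (hγ _).2 fun x => by
    rcases le_total (f x) (g x) with hfg | hfg
    · simpa [max_eq_right hfg] using accepted g (le_max_right _ _) x
    · simpa [max_eq_left hfg] using accepted f (le_max_left _ _) x
  rw [hT] at this
  linarith

end RiskMeasure

theorem stmt5_general {S : Type*} [MetricSpace S] [TopologicalSpace.SeparableSpace S]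
    (φ : BoundedContinuousFunction S ℝ → ℝ)
    (hT : ∀ (f : BoundedContinuousFunction S ℝ) (c : ℝ),
      φ (f + BoundedContinuousFunction.const S c) = φ f + c)
    (hM : ∀ f g : BoundedContinuousFunction S ℝ, f ≤ g → φ f ≤ φ g)
    -- continuity from above
    (hca : ∀ f : ℕ → BoundedContinuousFunction S ℝ,
      (∀ n, f (n + 1) ≤ f n) →
      (∀ x, Tendsto (fun n => f n x) atTop (nhds 0)) →
      Tendsto (fun n => φ (f n)) atTop (nhds 0)) :
    -- max-stability implies the dual representation with attained maximum
    ((∀ f g : BoundedContinuousFunction S ℝ, φ (f ⊔ g) ≤ max (φ f) (φ g)) →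
      ∀ f : BoundedContinuousFunction S ℝ, ∃ x : S,
        ((φ f : ℝ) : EReal) =
          ((f x : ℝ) : EReal) -
            (⨆ g : BoundedContinuousFunction S ℝ, ((g x - φ g : ℝ) : EReal)) ∧
        ∀ y : S,
          ((f y : ℝ) : EReal) -
              (⨆ g : BoundedContinuousFunction S ℝ, ((g y - φ g : ℝ) : EReal)) ≤
            ((φ f : ℝ) : EReal)) ∧
    -- conversely, if the acceptance set is of the form {f ≤ γ}, then φ is max-stable
    ((∃ γ : S → EReal, (∀ x, γ x ≠ ⊥) ∧
        ∀ f : BoundedContinuousFunction S ℝ,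
          (φ f ≤ 0 ↔ ∀ x, ((f x : ℝ) : EReal) ≤ γ x)) →
      ∀ f g : BoundedContinuousFunction S ℝ, φ (f ⊔ g) ≤ max (φ f) (φ g)) := by
  refine ⟨fun hms f => ?_,
    fun ⟨γ, _, hγ⟩ => RiskMeasure.isMaxStable_of_acceptance_eq hT hγ⟩
  obtain ⟨x, hx⟩ := RiskMeasure.exists_forall_sub_le hT hM hms hca f
  have hI : ∀ y, ((f y - φ f : ℝ) : EReal) ≤ ⨆ g : S →ᵇ ℝ, ((g y - φ g : ℝ) : EReal) :=
    fun y => le_iSup (fun g : S →ᵇ ℝ => ((g y - φ g : ℝ) : EReal)) f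
  have hIx : ⨆ g : S →ᵇ ℝ, ((g x - φ g : ℝ) : EReal) = ((f x - φ f : ℝ) : EReal) :=
    (iSup_le fun g => EReal.coe_le_coe_iff.2 (hx g)).antisymm (hI x)
  refine ⟨x, by rw [hIx, ← EReal.coe_sub, sub_sub_cancel], fun y => ?_⟩
  calc ((f y : ℝ) : EReal) - ⨆ g : S →ᵇ ℝ, ((g y - φ g : ℝ) : EReal)
      ≤ (f y : EReal) - ((f y - φ f : ℝ) : EReal) := EReal.sub_le_sub le_rfl (hI y)
    _ = φ f := by rw [← EReal.coe_sub, sub_sub_cancel]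

theorem stmt5 {S : Type*} [MetricSpace S] [Nonempty S] [TopologicalSpace.SeparableSpace S]
    (φ : BoundedContinuousFunction S ℝ → ℝ)
    (hN : φ 0 = 0)
    (hT : ∀ (f : BoundedContinuousFunction S ℝ) (c : ℝ),
      φ (f + BoundedContinuousFunction.const S c) = φ f + c)
    (hM : ∀ f g : BoundedContinuousFunction S ℝ, f ≤ g → φ f ≤ φ g)
    -- continuity from above
    (hca : ∀ f : ℕ → BoundedContinuousFunction S ℝ,
      (∀ n, f (n + 1) ≤ f n) →
      (∀ x, Tendsto (fun n => f n x) atTop (nhds 0)) →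
      Tendsto (fun n => φ (f n)) atTop (nhds 0)) :
    -- max-stability implies the dual representation with attained maximum
    ((∀ f g : BoundedContinuousFunction S ℝ, φ (f ⊔ g) ≤ max (φ f) (φ g)) →
      ∀ f : BoundedContinuousFunction S ℝ, ∃ x : S,
        ((φ f : ℝ) : EReal) =
          ((f x : ℝ) : EReal) -
            (⨆ g : BoundedContinuousFunction S ℝ, ((g x - φ g : ℝ) : EReal)) ∧
        ∀ y : S,
          ((f y : ℝ) : EReal) -
              (⨆ g : BoundedContinuousFunction S ℝ, ((g y - φ g : ℝ) : EReal)) ≤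
            ((φ f : ℝ) : EReal)) ∧
    -- conversely, if the acceptance set is of the form {f ≤ γ}, then φ is max-stable
    ((∃ γ : S → EReal, (∀ x, γ x ≠ ⊥) ∧
        ∀ f : BoundedContinuousFunction S ℝ,
          (φ f ≤ 0 ↔ ∀ x, ((f x : ℝ) : EReal) ≤ γ x)) →
      ∀ f g : BoundedContinuousFunction S ℝ, φ (f ⊔ g) ≤ max (φ f) (φ g)) :=
  stmt5_general φ hT hM hca
end
end

section
/- Let K be a compact metric space and φ : C(K) → ℝ a max-stable monetary risk measure. Then φ(f) = max_{x ∈ K} { f(x) − I_min(x) } for all f ∈ C(K), where I_min(x) = sup_{f ∈ C(K)} { f(x) − φ(f) }. -/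
open MeasureTheory Set Metric Filter Topology

noncomputable section

/-!
Fix `f`. Suppose no point `x` satisfies `g x - φ g ≤ f x - φ f` for all `g`. Then every `x` has a
`g_x` with `f x - φ f < g_x x - φ g_x`. Shifting `g_x` by a suitable constant gives `h_x` with
`f x < h_x x` and `φ h_x < φ f`. By compactness, finitely many of the open sets `{f < h_x}` cover
`K`, so `f` lies below the maximum of finitely many `h_x`, and monotonicity together with
max-stability gives `φ f ≤ max φ h_x < φ f`. So some `x` attains the supremum defining `I_min x`
at `f`, where `f x - I_min x = φ f`; at every other point `I_min y ≥ f y - φ f`.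
-/

theorem Finset.map_sup'_le_sup'_map {α β ι : Type*} [SemilatticeSup α] [LinearOrder β]
    {φ : α → β} (hφ : ∀ a b, φ (a ⊔ b) ≤ max (φ a) (φ b))
    (t : Finset ι) (ht : t.Nonempty) (h : ι → α) :
    φ (t.sup' ht h) ≤ t.sup' ht (φ ∘ h) :=
  Finset.sup'_induction ht h (p := fun a => φ a ≤ t.sup' ht (φ ∘ h))
    (fun _ h₁ _ h₂ => (hφ _ _).trans (max_le h₁ h₂))
    (fun _ hi => Finset.le_sup' (φ ∘ h) hi)

theorem ContinuousMap.exists_finset_le_sup'_of_lt {K β : Type*} [TopologicalSpace K]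
    [CompactSpace K] [Nonempty K] [LinearOrder β] [TopologicalSpace β] [OrderClosedTopology β]
    (f : C(K, β)) (h : K → C(K, β)) (hfh : ∀ x, f x < h x x) :
    ∃ (t : Finset K) (ht : t.Nonempty), f ≤ t.sup' ht h := by
  obtain ⟨t, hcover⟩ := isCompact_univ.elim_finite_subcover (fun x => {y | f y < h x y})
    (fun x => isOpen_lt f.continuous (h x).continuous)
    (fun y _ => mem_iUnion.2 ⟨y, hfh y⟩)
  have hmem : ∀ y, ∃ x ∈ t, f y < h x y := fun y => by
    simpa using hcover (mem_univ y)
  obtain ⟨x₀, hx₀, -⟩ := hmem (Classical.arbitrary K)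
  have ht : t.Nonempty := ⟨x₀, hx₀⟩
  refine ⟨t, ht, fun y => ?_⟩
  obtain ⟨x, hx, hy⟩ := hmem y
  change f y ≤ t.sup' ht h y
  rw [ContinuousMap.sup'_apply]
  exact hy.le.trans (Finset.le_sup' (fun i => h i y) hx)

theorem exists_forall_apply_sub_le_of_maxStable {K : Type*} [TopologicalSpace K]
    [CompactSpace K] [Nonempty K] (φ : C(K, ℝ) → ℝ)
    (hT : ∀ (f : C(K, ℝ)) (c : ℝ), φ (f + ContinuousMap.const K c) = φ f + c)
    (hM : ∀ f g : C(K, ℝ), f ≤ g → φ f ≤ φ g)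
    (hms : ∀ f g : C(K, ℝ), φ (f ⊔ g) ≤ max (φ f) (φ g)) (f : C(K, ℝ)) :
    ∃ x, ∀ g : C(K, ℝ), g x - φ g ≤ f x - φ f := by
  by_contra! hcon
  choose g hg using hcon
  have hshift : ∀ x, ∃ a, f x - g x x < a ∧ a < φ f - φ (g x) :=
    fun x => exists_between (by linarith [hg x])
  choose a ha using hshift
  obtain ⟨t, ht, hf⟩ := (f.exists_finset_le_sup'_of_lt
    (fun x => g x + ContinuousMap.const K (a x))) fun x => by
      simp only [ContinuousMap.add_apply, ContinuousMap.const_apply]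
      linarith [(ha x).1]
  have hle := (hM _ _ hf).trans (Finset.map_sup'_le_sup'_map hms t ht _)
  obtain ⟨i, -, hi⟩ := (Finset.le_sup'_iff ht).1 hle
  rw [Function.comp_apply, hT] at hi
  linarith [(ha i).2]

theorem stmt6_general {K : Type*} [MetricSpace K] [CompactSpace K] [Nonempty K]
    (φ : C(K, ℝ) → ℝ)
    (hT : ∀ (f : C(K, ℝ)) (c : ℝ), φ (f + ContinuousMap.const K c) = φ f + c)
    (hM : ∀ f g : C(K, ℝ), f ≤ g → φ f ≤ φ g)
    (hms : ∀ f g : C(K, ℝ), φ (f ⊔ g) ≤ max (φ f) (φ g)) :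
    ∀ f : C(K, ℝ), ∃ x : K,
      ((φ f : ℝ) : EReal) =
        ((f x : ℝ) : EReal) - (⨆ g : C(K, ℝ), ((g x - φ g : ℝ) : EReal)) ∧
      ∀ y : K,
        ((f y : ℝ) : EReal) - (⨆ g : C(K, ℝ), ((g y - φ g : ℝ) : EReal)) ≤
          ((φ f : ℝ) : EReal) := by
  intro f
  have hf_le_Imin : ∀ y, ((f y - φ f : ℝ) : EReal) ≤ ⨆ g : C(K, ℝ), ((g y - φ g : ℝ) : EReal) :=
    fun y => le_iSup (fun g : C(K, ℝ) => ((g y - φ g : ℝ) : EReal)) f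
  obtain ⟨x, hx⟩ := exists_forall_apply_sub_le_of_maxStable φ hT hM hms f
  have hImin : (⨆ g : C(K, ℝ), ((g x - φ g : ℝ) : EReal)) = ((f x - φ f : ℝ) : EReal) :=
    le_antisymm (iSup_le fun g => EReal.coe_le_coe_iff.2 (hx g)) (hf_le_Imin x)
  refine ⟨x, ?_, fun y => ?_⟩
  · rw [hImin, ← EReal.coe_sub, sub_sub_cancel]
  · calc ((f y : ℝ) : EReal) - (⨆ g : C(K, ℝ), ((g y - φ g : ℝ) : EReal))
        ≤ ((f y : ℝ) : EReal) - ((f y - φ f : ℝ) : EReal) :=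
          EReal.sub_le_sub le_rfl (hf_le_Imin y)
      _ = ((φ f : ℝ) : EReal) := by rw [← EReal.coe_sub, sub_sub_cancel]

theorem stmt6 {K : Type*} [MetricSpace K] [CompactSpace K] [Nonempty K]
    (φ : C(K, ℝ) → ℝ)
    (hN : φ 0 = 0)
    (hT : ∀ (f : C(K, ℝ)) (c : ℝ), φ (f + ContinuousMap.const K c) = φ f + c)
    (hM : ∀ f g : C(K, ℝ), f ≤ g → φ f ≤ φ g)
    (hms : ∀ f g : C(K, ℝ), φ (f ⊔ g) ≤ max (φ f) (φ g)) :
    ∀ f : C(K, ℝ), ∃ x : K,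
      ((φ f : ℝ) : EReal) =
        ((f x : ℝ) : EReal) - (⨆ g : C(K, ℝ), ((g x - φ g : ℝ) : EReal)) ∧
      ∀ y : K,
        ((f y : ℝ) : EReal) - (⨆ g : C(K, ℝ), ((g y - φ g : ℝ) : EReal)) ≤
          ((φ f : ℝ) : EReal) :=
  stmt6_general φ hT hM hms
end
end

section
/- Let φ : B_b(S) → ℝ be a monetary risk measure with concentration function J_A := inf_{r ∈ ℝ} φ(r·1_{A^c}) for Borel sets A. Then for every Borel set A and s ∈ ℝ: (i) if s > −J_A then φ(s·1_A − r·1_{A^c}) > 0 for all r > 0; (ii) if s < −J_A then there exists r > 0 with φ(s·1_A − r·1_{A^c}) ≤ 0. Consequently, −J_A = sup { s ≥ 0 : ∃ r > 0 with φ(s·1_A − r·1_{A^c}) ≤ 0 }. -/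
open MeasureTheory Set Metric Filter Topology

noncomputable section

theorem stmt7 {S : Type*} [MetricSpace S] [MeasurableSpace S] [BorelSpace S]
    (φ : (S → ℝ) → ℝ) (hmon : Monetary (Bb S) φ)
    (A : Set S) (hA : MeasurableSet A) :
    (∀ s : ℝ, -conc φ A < (s : EReal) → ∀ r : ℝ, 0 < r →
      0 < φ (A.indicator (fun _ => s) + Aᶜ.indicator fun _ => -r)) ∧
    (∀ s : ℝ, (s : EReal) < -conc φ A → ∃ r : ℝ, 0 < r ∧
      φ (A.indicator (fun _ => s) + Aᶜ.indicator fun _ => -r) ≤ 0) ∧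
    -conc φ A = sSup ((fun s : ℝ => (s : EReal)) ''
      {s : ℝ | 0 ≤ s ∧ ∃ r : ℝ, 0 < r ∧
        φ (A.indicator (fun _ => s) + Aᶜ.indicator fun _ => -r) ≤ 0}) := by
  obtain ⟨h0, htr, hmono⟩ := hmon
  have hBbInd : ∀ (B : Set S), MeasurableSet B → ∀ t : ℝ,
      B.indicator (fun _ => t) ∈ Bb S := by
    intro B hB t
    refine ⟨measurable_const.indicator hB, |t|, fun x => ?_⟩
    by_cases hx : x ∈ B <;> simp [hx, abs_nonneg]
  have hzero : φ (Aᶜ.indicator fun _ => (0:ℝ)) = 0 := by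
    have h : (Aᶜ.indicator fun _ => (0:ℝ)) = 0 := by
      funext x; by_cases hx : x ∈ Aᶜ <;> simp [hx]
    rw [h, h0]
  -- monotonicity in the indicator constant
  have hmonInd : ∀ t t' : ℝ, t ≤ t' →
      φ (Aᶜ.indicator fun _ => t) ≤ φ (Aᶜ.indicator fun _ => t') := by
    intro t t' htt
    refine hmono _ (hBbInd _ hA.compl t) _ (hBbInd _ hA.compl t') fun x => ?_
    by_cases hx : x ∈ Aᶜ <;> simp [hx, htt]
  -- key translation identity
  have key : ∀ s t : ℝ, φ (A.indicator (fun _ => s) + Aᶜ.indicator fun _ => t)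
      = φ (Aᶜ.indicator fun _ => (t - s)) + s := by
    intro s t
    have hfe : A.indicator (fun _ => s) + (Aᶜ.indicator fun _ => t)
        = (Aᶜ.indicator fun _ => (t - s)) + fun _ => s := by
      funext x
      by_cases hx : x ∈ A <;> simp [hx]
    rw [hfe, htr _ (hBbInd _ hA.compl _) s]
  have hconc_le : ∀ t : ℝ, conc φ A ≤ (φ (Aᶜ.indicator fun _ => t) : EReal) :=
    fun t => iInf_le _ t
  have hconc_nonpos : conc φ A ≤ 0 := by
    have h := hconc_le 0
    rwa [hzero] at h
  have hneg_nonneg : (0 : EReal) ≤ -conc φ A := by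
    rw [← neg_zero]
    exact EReal.neg_le_neg_iff.mpr hconc_nonpos
  -- Part (i)
  have part1 : ∀ s : ℝ, -conc φ A < (s : EReal) → ∀ r : ℝ, 0 < r →
      0 < φ (A.indicator (fun _ => s) + Aᶜ.indicator fun _ => -r) := by
    intro s hs r _
    have h1 : ((-s : ℝ) : EReal) < conc φ A := by
      rw [EReal.coe_neg]
      exact EReal.neg_lt_comm.mp hs
    have h2 : ((-s : ℝ) : EReal) < (φ (Aᶜ.indicator fun _ => (-r - s)) : EReal) :=
      lt_of_lt_of_le h1 (hconc_le _)
    have h3 : -s < φ (Aᶜ.indicator fun _ => (-r - s)) := EReal.coe_lt_coe_iff.mp h2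
    rw [key s (-r)]
    linarith
  -- Part (ii)
  have part2 : ∀ s : ℝ, (s : EReal) < -conc φ A → ∃ r : ℝ, 0 < r ∧
      φ (A.indicator (fun _ => s) + Aᶜ.indicator fun _ => -r) ≤ 0 := by
    intro s hs
    have h1 : conc φ A < ((-s : ℝ) : EReal) := by
      rw [EReal.coe_neg]
      exact EReal.lt_neg_comm.mp hs
    obtain ⟨t, ht⟩ := iInf_lt_iff.mp h1
    have ht2 : φ (Aᶜ.indicator fun _ => t) < -s := EReal.coe_lt_coe_iff.mp ht
    set t' : ℝ := min t (-s - 1) with ht'def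
    have htle : φ (Aᶜ.indicator fun _ => t') < -s :=
      lt_of_le_of_lt (hmonInd t' t (min_le_left _ _)) ht2
    have ht'le : t' ≤ -s - 1 := min_le_right _ _
    refine ⟨-t' - s, by linarith, ?_⟩
    have hneg : -(-t' - s) = t' + s := by ring
    rw [hneg, key s (t' + s)]
    have hsimp : t' + s - s = t' := by ring
    rw [hsimp]
    linarith
  refine ⟨part1, part2, ?_⟩
  -- Part (iii)
  apply le_antisymm
  · -- -conc φ A ≤ sSup ...
    by_contra hcon
    push_neg at hcon
    have hsup0 : (0 : EReal) ≤ sSup ((fun s : ℝ => (s : EReal)) ''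
        {s : ℝ | 0 ≤ s ∧ ∃ r : ℝ, 0 < r ∧
          φ (A.indicator (fun _ => s) + Aᶜ.indicator fun _ => -r) ≤ 0}) := by
      apply le_sSup
      refine ⟨0, ⟨le_refl 0, 1, one_pos, ?_⟩, by norm_num⟩
      rw [key 0 (-1)]
      have := hmonInd (-1 - 0) 0 (by norm_num)
      rw [hzero] at this
      linarith
    obtain ⟨c, hc1, hc2⟩ := EReal.exists_between_coe_real hcon
    have hc0 : (0:ℝ) ≤ c := by
      have : (0:EReal) < (c:EReal) := lt_of_le_of_lt hsup0 hc1
      exact_mod_cast this.le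
    obtain ⟨r, hr, hφr⟩ := part2 c hc2
    exact absurd hc1 (not_lt.mpr (le_sSup ⟨c, ⟨hc0, r, hr, hφr⟩, rfl⟩))
  · -- sSup ≤ -conc φ A
    apply sSup_le
    rintro x ⟨s, ⟨hs0, r, hr, hφr⟩, rfl⟩
    by_contra hcon
    push_neg at hcon
    exact absurd hφr (not_le.mpr (part1 s hcon r hr))
end
end

section
/- A function φ : B_b(S) → ℝ is a max-stable monetary risk measure if and only if its concentration function J : Borel sets → [−∞, 0], J_A := inf_{r∈ℝ} φ(r·1_{A^c}), is a max-stable penalty and φ(f) = sup_{r ∈ ℝ} { r + J_{{f > r}} } for all f ∈ B_b(S). -/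
/-!
A max-stable monetary risk measure is pinned down by its values on the functions `r • 1_{Aᶜ}`.
Monotonicity and translation give `r + J_{f > r} ≤ φ f`. Conversely, on a grid `r_i` of mesh `δ`
covering the range of `f`, `f` lies below the maximum of the finitely many functions
`s_i • 1_{f ≤ r_i} + r_i + δ`, so max-stability gives `φ f ≤ max_i (r_i + J_{f > r_i}) + δ`.
In the other direction, a maxitive integral inherits translation from reindexing `r`,
monotonicity from that of the penalty, and max-stability from `{f ⊔ g > r} = {f > r} ∪ {g > r}`.
-/

open MeasureTheory Set Metric Filter Topology

noncomputable section

namespace Bb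

variable {S : Type*} [MeasurableSpace S]

lemma const_mem (c : ℝ) : (fun _ : S => c) ∈ Bb S :=
  ⟨measurable_const, |c|, fun _ => le_rfl⟩

lemma zero_mem : (0 : S → ℝ) ∈ Bb S :=
  const_mem 0

lemma add_mem {f g : S → ℝ} (hf : f ∈ Bb S) (hg : g ∈ Bb S) : f + g ∈ Bb S := by
  obtain ⟨hfm, C, hC⟩ := hf
  obtain ⟨hgm, D, hD⟩ := hg
  exact ⟨hfm.add hgm, C + D, fun x => (abs_add_le _ _).trans (add_le_add (hC x) (hD x))⟩

lemma sup_mem {f g : S → ℝ} (hf : f ∈ Bb S) (hg : g ∈ Bb S) : f ⊔ g ∈ Bb S := by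
  obtain ⟨hfm, C, hC⟩ := hf
  obtain ⟨hgm, D, hD⟩ := hg
  exact ⟨hfm.sup hgm, max C D, fun x =>
    abs_max_le_max_abs_abs.trans (max_le_max (hC x) (hD x))⟩

lemma indicator_const_mem {A : Set S} (hA : MeasurableSet A) (r : ℝ) :
    A.indicator (fun _ => r) ∈ Bb S := by
  refine ⟨measurable_const.indicator hA, |r|, fun x => ?_⟩
  by_cases hx : x ∈ A <;> simp [hx]

end Bb

section IndicatorNonpos

variable {S : Type*} {r : ℝ}

lemma indicator_const_antitone_of_nonpos (hr : r ≤ 0) {A B : Set S} (hAB : A ⊆ B) :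
    B.indicator (fun _ => r) ≤ A.indicator (fun _ => r) := by
  intro x
  by_cases hA : x ∈ A
  · simp [hA, hAB hA]
  · by_cases hB : x ∈ B <;> simp [hA, hB, hr]

lemma indicator_inter_const_of_nonpos (hr : r ≤ 0) (A B : Set S) :
    (A ∩ B).indicator (fun _ => r) = A.indicator (fun _ => r) ⊔ B.indicator (fun _ => r) := by
  ext x
  by_cases hA : x ∈ A <;> by_cases hB : x ∈ B <;> simp [hA, hB, hr]

end IndicatorNonpos

lemma EReal.iSup_add_coe {ι : Sort*} (g : ι → EReal) (c : ℝ) :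
    ⨆ i, (g i + c) = (⨆ i, g i) + c :=
  le_antisymm (iSup_le fun i => add_le_add_left (le_iSup g i) _)
    (EReal.add_le_of_forall_lt fun a ha b hb => by
      obtain ⟨i, hi⟩ := lt_iSup_iff.1 ha
      exact le_iSup_of_le i (add_le_add hi.le hb.le))

def maxitiveIntegral {S : Type*} (μ : Set S → EReal) (f : S → ℝ) : EReal :=
  ⨆ r : ℝ, (r : EReal) + μ {x | r < f x}

section MaxitiveIntegral

variable {S : Type*} {μ : Set S → EReal}

lemma maxitiveIntegral_const (hempty : μ ∅ = ⊥) (huniv : μ univ = 0) (c : ℝ) :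
    maxitiveIntegral μ (fun _ => c) = c := by
  refine le_antisymm (iSup_le fun r => ?_) (EReal.ge_of_forall_gt_iff_ge.1 fun z hz => ?_)
  · by_cases hr : r < c
    · simpa [hr, huniv] using hr.le
    · simp [hr, hempty]
  · exact le_iSup_of_le z (by simp [EReal.coe_lt_coe_iff.1 hz, huniv])

lemma maxitiveIntegral_add_const (f : S → ℝ) (c : ℝ) :
    maxitiveIntegral μ (f + fun _ => c) = maxitiveIntegral μ f + c := by
  rw [maxitiveIntegral, maxitiveIntegral, ← EReal.iSup_add_coe,
    ← (Equiv.addRight c).iSup_comp]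
  refine iSup_congr fun r => ?_
  simp only [Equiv.coe_addRight, Pi.add_apply, add_lt_add_iff_right, EReal.coe_add]
  rw [add_right_comm]

variable [MeasurableSpace S]

lemma maxitiveIntegral_mono
    (hμ : ∀ A B : Set S, MeasurableSet A → MeasurableSet B → A ⊆ B → μ A ≤ μ B)
    {f g : S → ℝ} (hf : Measurable f) (hg : Measurable g) (hfg : f ≤ g) :
    maxitiveIntegral μ f ≤ maxitiveIntegral μ g :=
  iSup_mono fun _ => add_le_add_right (hμ _ _ (hf measurableSet_Ioi) (hg measurableSet_Ioi)
    fun x hx => lt_of_lt_of_le hx (hfg x)) _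

lemma maxitiveIntegral_sup_le
    (hμ : ∀ A B : Set S, MeasurableSet A → MeasurableSet B → μ (A ∪ B) ≤ max (μ A) (μ B))
    {f g : S → ℝ} (hf : Measurable f) (hg : Measurable g) :
    maxitiveIntegral μ (f ⊔ g) ≤ max (maxitiveIntegral μ f) (maxitiveIntegral μ g) := by
  refine iSup_le fun r => ?_
  have hunion : {x | r < (f ⊔ g) x} = {x | r < f x} ∪ {x | r < g x} := by
    ext x
    simp [lt_sup_iff]
  calc (r : EReal) + μ {x | r < (f ⊔ g) x}
      ≤ r + max (μ {x | r < f x}) (μ {x | r < g x}) := by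
        rw [hunion]
        exact add_le_add_right (hμ _ _ (hf measurableSet_Ioi) (hg measurableSet_Ioi)) _
    _ = max (r + μ {x | r < f x}) (r + μ {x | r < g x}) :=
        Monotone.map_max fun _ _ h => add_le_add_right h _
    _ ≤ max (maxitiveIntegral μ f) (maxitiveIntegral μ g) :=
        max_le_max (le_iSup (fun r : ℝ => (r : EReal) + μ {x | r < f x}) r)
          (le_iSup (fun r : ℝ => (r : EReal) + μ {x | r < g x}) r)

end MaxitiveIntegral

namespace Monetary

variable {S : Type*} {X : Set (S → ℝ)} {φ : (S → ℝ) → ℝ}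

lemma map_add_const (hM : Monetary X φ) {f : S → ℝ} (hf : f ∈ X) (c : ℝ) :
    φ (f + fun _ => c) = φ f + c :=
  hM.2.1 f hf c

lemma mono (hM : Monetary X φ) {f g : S → ℝ} (hf : f ∈ X) (hg : g ∈ X) (hfg : f ≤ g) :
    φ f ≤ φ g :=
  hM.2.2 f hf g hg hfg

variable [MeasurableSpace S]

lemma map_const (hM : Monetary (Bb S) φ) (c : ℝ) : φ (fun _ => c) = c := by
  simpa [hM.1] using hM.map_add_const Bb.zero_mem c

lemma nonempty (hM : Monetary (Bb S) φ) : Nonempty S := by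
  by_contra hS
  have : IsEmpty S := not_nonempty_iff.1 hS
  have h := hM.map_add_const Bb.zero_mem 1
  rw [Subsingleton.elim (0 + fun _ => (1 : ℝ)) 0] at h
  linarith

lemma map_indicator_const_mono (hM : Monetary (Bb S) φ) {A : Set S} (hA : MeasurableSet A)
    {r s : ℝ} (hrs : r ≤ s) : φ (A.indicator fun _ => r) ≤ φ (A.indicator fun _ => s) :=
  hM.mono (Bb.indicator_const_mem hA r) (Bb.indicator_const_mem hA s)
    fun _ => Set.indicator_le_indicator hrs

end Monetary

namespace MaxStable

variable {S : Type*} [MeasurableSpace S] {φ : (S → ℝ) → ℝ}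

lemma map_finset_sup'_le (hX : MaxStable (Bb S) φ) {ι : Type*} {s : Finset ι}
    (hs : s.Nonempty) {h : ι → S → ℝ} (hh : ∀ i ∈ s, h i ∈ Bb S) :
    s.sup' hs h ∈ Bb S ∧ φ (s.sup' hs h) ≤ s.sup' hs (φ ∘ h) :=
  Finset.sup'_induction (p := fun g => g ∈ Bb S ∧ φ g ≤ s.sup' hs (φ ∘ h)) hs h
    (fun f ⟨hf, hφf⟩ g ⟨hg, hφg⟩ => ⟨Bb.sup_mem hf hg, (hX f hf g hg).trans (max_le hφf hφg)⟩)
    (fun i hi => ⟨hh i hi, Finset.le_sup' (φ ∘ h) hi⟩)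

lemma exists_le_map_of_forall_exists_le (hM : Monetary (Bb S) φ) (hX : MaxStable (Bb S) φ)
    {ι : Type*} {s : Finset ι} {h : ι → S → ℝ} (hh : ∀ i ∈ s, h i ∈ Bb S)
    {f : S → ℝ} (hf : f ∈ Bb S) (hcov : ∀ x, ∃ i ∈ s, f x ≤ h i x) :
    ∃ i ∈ s, φ f ≤ φ (h i) := by
  obtain ⟨x⟩ := hM.nonempty
  have hs : s.Nonempty := (hcov x).imp fun _ hi => hi.1
  obtain ⟨hsup, hφsup⟩ := hX.map_finset_sup'_le hs hh
  have hfsup : f ≤ s.sup' hs h := fun x => by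
    obtain ⟨i, hi, hfx⟩ := hcov x
    exact hfx.trans (Finset.sup'_apply hs h x ▸ Finset.le_sup' (fun i => h i x) hi)
  obtain ⟨i, hi, hmax⟩ := Finset.exists_mem_eq_sup' hs (φ ∘ h)
  exact ⟨i, hi, (hM.mono hf hsup hfsup).trans (hφsup.trans_eq hmax)⟩

end MaxStable

section Concentration

variable {S : Type*} {φ : (S → ℝ) → ℝ}

lemma conc_le (A : Set S) (r : ℝ) :
    conc φ A ≤ φ (Aᶜ.indicator fun _ => r) :=
  iInf_le (fun r : ℝ => (φ (Aᶜ.indicator fun _ => r) : EReal)) r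

lemma conc_lt_iff {A : Set S} {c : EReal} :
    conc φ A < c ↔ ∃ r : ℝ, (φ (Aᶜ.indicator fun _ => r) : EReal) < c :=
  iInf_lt_iff

lemma exists_add_lt_of_add_conc_lt {A : Set S} {r z : ℝ} (h : (r : EReal) + conc φ A < z) :
    ∃ s : ℝ, φ (Aᶜ.indicator fun _ => s) + r < z := by
  have hlt : conc φ A < ((z - r : ℝ) : EReal) := by
    rw [EReal.coe_sub, EReal.lt_sub_iff_add_lt (Or.inl (EReal.coe_ne_bot r))
      (Or.inl (EReal.coe_ne_top r)), add_comm]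
    exact h
  obtain ⟨s, hs⟩ := conc_lt_iff.1 hlt
  exact ⟨s, by linarith [EReal.coe_lt_coe_iff.1 hs]⟩

variable [MeasurableSpace S]

lemma conc_lt_iff_nonpos (hM : Monetary (Bb S) φ) {A : Set S} (hA : MeasurableSet A)
    {c : EReal} : conc φ A < c ↔ ∃ r ≤ 0, (φ (Aᶜ.indicator fun _ => r) : EReal) < c := by
  refine ⟨fun h => ?_, fun ⟨r, _, hr⟩ => (conc_le A r).trans_lt hr⟩
  obtain ⟨r, hr⟩ := conc_lt_iff.1 h
  exact ⟨min r 0, min_le_right r 0, lt_of_le_of_lt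
    (EReal.coe_le_coe (hM.map_indicator_const_mono hA.compl (min_le_left r 0))) hr⟩

lemma conc_empty (hM : Monetary (Bb S) φ) : conc φ (∅ : Set S) = ⊥ := by
  simp only [conc, compl_empty, indicator_univ, hM.map_const]
  exact (EReal.eq_bot_iff_forall_lt _).2 fun y =>
    (iInf_le _ (y - 1)).trans_lt (EReal.coe_lt_coe (sub_one_lt y))

lemma conc_univ (hM : Monetary (Bb S) φ) : conc φ (univ : Set S) = 0 := by
  simp [conc, hM.map_const]

lemma conc_mono (hM : Monetary (Bb S) φ) {A B : Set S} (hA : MeasurableSet A)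
    (hB : MeasurableSet B) (hAB : A ⊆ B) : conc φ A ≤ conc φ B := by
  refine le_of_forall_gt fun c hc => ?_
  obtain ⟨r, hr, hφr⟩ := (conc_lt_iff_nonpos hM hB).1 hc
  refine (conc_le A r).trans_lt (lt_of_le_of_lt (EReal.coe_le_coe ?_) hφr)
  exact hM.mono (Bb.indicator_const_mem hA.compl r) (Bb.indicator_const_mem hB.compl r)
    (indicator_const_antitone_of_nonpos hr (compl_subset_compl.2 hAB))

lemma conc_union_le (hM : Monetary (Bb S) φ) (hX : MaxStable (Bb S) φ) {A B : Set S}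
    (hA : MeasurableSet A) (hB : MeasurableSet B) :
    conc φ (A ∪ B) ≤ max (conc φ A) (conc φ B) := by
  refine le_of_forall_gt fun c hc => ?_
  obtain ⟨r, hr, hφr⟩ := (conc_lt_iff_nonpos hM hA).1 ((le_max_left _ _).trans_lt hc)
  obtain ⟨s, hs, hφs⟩ := (conc_lt_iff_nonpos hM hB).1 ((le_max_right _ _).trans_lt hc)
  have hmin : min r s ≤ 0 := min_le_of_left_le hr
  refine (conc_le (A ∪ B) (min r s)).trans_lt ?_
  rw [compl_union, indicator_inter_const_of_nonpos hmin]
  rcases le_max_iff.1 (hX _ (Bb.indicator_const_mem hA.compl _) _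
    (Bb.indicator_const_mem hB.compl _)) with hle | hle
  · exact lt_of_le_of_lt (EReal.coe_le_coe
      (hle.trans (hM.map_indicator_const_mono hA.compl (min_le_left r s)))) hφr
  · exact lt_of_le_of_lt (EReal.coe_le_coe
      (hle.trans (hM.map_indicator_const_mono hB.compl (min_le_right r s)))) hφs

end Concentration

lemma exists_lt_mem_Ioc_grid {a δ y : ℝ} {n : ℕ} (hδ : 0 < δ) (hay : a < y)
    (hyn : y ≤ a + n * δ) : ∃ i < n, a + i * δ < y ∧ y ≤ a + i * δ + δ := by
  have hpos : 0 < (y - a) / δ := div_pos (sub_pos.2 hay) hδ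
  have hk_le : ⌈(y - a) / δ⌉₊ ≤ n := Nat.ceil_le.2 ((div_le_iff₀ hδ).2 (by linarith))
  have hk_ge : y - a ≤ ⌈(y - a) / δ⌉₊ * δ := (div_le_iff₀ hδ).1 (Nat.le_ceil _)
  have hk_lt : (⌈(y - a) / δ⌉₊ - 1 : ℝ) * δ < y - a :=
    (lt_div_iff₀ hδ).1 (by linarith [Nat.ceil_lt_add_one hpos.le])
  obtain ⟨i, hi⟩ := Nat.exists_eq_add_one_of_ne_zero (Nat.ceil_pos.2 hpos).ne'
  rw [hi] at hk_le hk_ge hk_lt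
  push_cast at hk_ge hk_lt
  exact ⟨i, by omega, by linarith, by linarith⟩

section Representation

variable {S : Type*} [MeasurableSpace S] {φ : (S → ℝ) → ℝ}

lemma maxitiveIntegral_conc_le (hM : Monetary (Bb S) φ) {f : S → ℝ} (hf : f ∈ Bb S) :
    maxitiveIntegral (conc φ) f ≤ φ f := by
  obtain ⟨hfm, C, hC⟩ := id hf
  refine iSup_le fun r => ?_
  have hA : MeasurableSet {x | r < f x} := hfm measurableSet_Ioi
  have hind := Bb.indicator_const_mem hA.compl (-C - r)
  have hle : ({x | r < f x}ᶜ.indicator fun _ => -C - r) + (fun _ => r) ≤ f := fun x => by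
    by_cases hx : r < f x
    · simpa [hx] using hx.le
    · simp only [Pi.add_apply, indicator_of_mem (show x ∈ {x | r < f x}ᶜ from hx)]
      linarith [neg_abs_le (f x), hC x]
  calc (r : EReal) + conc φ {x | r < f x}
      ≤ r + φ ({x | r < f x}ᶜ.indicator fun _ => -C - r) :=
        add_le_add_right (conc_le _ _) _
    _ = φ (({x | r < f x}ᶜ.indicator fun _ => -C - r) + fun _ => r) := by
        rw [hM.map_add_const hind, add_comm, EReal.coe_add]
    _ ≤ φ f := EReal.coe_le_coe (hM.mono (Bb.add_mem hind (Bb.const_mem r)) hf hle)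

lemma le_maxitiveIntegral_conc (hM : Monetary (Bb S) φ) (hX : MaxStable (Bb S) φ)
    {f : S → ℝ} (hf : f ∈ Bb S) : (φ f : EReal) ≤ maxitiveIntegral (conc φ) f := by
  obtain ⟨-, C, hC⟩ := id hf
  refine EReal.ge_of_forall_gt_iff_ge.1 fun z hz => ?_
  set δ := φ f - z
  have hδ : 0 < δ := sub_pos.2 (EReal.coe_lt_coe_iff.1 hz)
  obtain ⟨n, hn⟩ := exists_nat_ge ((2 * C + 1) / δ)
  set r : ℕ → ℝ := fun i => -C - 1 + i * δ
  suffices ∃ i, (z : EReal) ≤ r i + conc φ {x | r i < f x} from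
    let ⟨i, hi⟩ := this
    hi.trans (le_iSup (fun r : ℝ => (r : EReal) + conc φ {x | r < f x}) (r i))
  by_contra! hlt
  choose s hs using fun i => exists_add_lt_of_add_conc_lt (hlt i)
  set h : ℕ → S → ℝ := fun i => ({x | r i < f x}ᶜ.indicator fun _ => s i) + fun _ => r i + δ
  have hh : ∀ i, h i ∈ Bb S := fun i =>
    Bb.add_mem (Bb.indicator_const_mem (hf.1 measurableSet_Ioi).compl _) (Bb.const_mem _)
  have hcov : ∀ x, ∃ i ∈ Finset.range n, f x ≤ h i x := fun x => by
    obtain ⟨i, hin, hri, hfx⟩ := exists_lt_mem_Ioc_grid hδ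
      (show -C - 1 < f x by linarith [neg_abs_le (f x), hC x])
      (show f x ≤ -C - 1 + n * δ by linarith [(div_le_iff₀ hδ).1 hn, le_abs_self (f x), hC x])
    refine ⟨i, Finset.mem_range.2 hin, ?_⟩
    simpa [h, indicator_of_notMem (show x ∉ {x | r i < f x}ᶜ from not_not.2 hri)] using hfx
  obtain ⟨i, -, hφi⟩ := hX.exists_le_map_of_forall_exists_le hM (fun i _ => hh i) hf hcov
  have hφh : φ (h i) = φ ({x | r i < f x}ᶜ.indicator fun _ => s i) + (r i + δ) :=
    hM.map_add_const (Bb.indicator_const_mem (hf.1 measurableSet_Ioi).compl _) _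
  linarith [hs i]

lemma map_eq_maxitiveIntegral_conc (hM : Monetary (Bb S) φ) (hX : MaxStable (Bb S) φ)
    {f : S → ℝ} (hf : f ∈ Bb S) : (φ f : EReal) = maxitiveIntegral (conc φ) f :=
  le_antisymm (le_maxitiveIntegral_conc hM hX hf) (maxitiveIntegral_conc_le hM hf)

end Representation

section Converse

variable {S : Type*} [MeasurableSpace S] {φ : (S → ℝ) → ℝ} {μ : Set S → EReal}

lemma monetary_of_eq_maxitiveIntegral (hempty : μ ∅ = ⊥) (huniv : μ univ = 0)
    (hμ : ∀ A B : Set S, MeasurableSet A → MeasurableSet B → A ⊆ B → μ A ≤ μ B)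
    (hφ : ∀ f ∈ Bb S, (φ f : EReal) = maxitiveIntegral μ f) : Monetary (Bb S) φ := by
  refine ⟨?_, fun f hf c => ?_, fun f hf g hg hfg => ?_⟩
  · have h0 := hφ 0 Bb.zero_mem
    rw [Pi.zero_def, maxitiveIntegral_const hempty huniv] at h0
    exact_mod_cast h0
  · have h := hφ _ (Bb.add_mem hf (Bb.const_mem c))
    rw [maxitiveIntegral_add_const, ← hφ f hf] at h
    exact_mod_cast h
  · rw [← EReal.coe_le_coe_iff, hφ f hf, hφ g hg]
    exact maxitiveIntegral_mono hμ hf.1 hg.1 hfg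

lemma maxStable_of_eq_maxitiveIntegral
    (hμ : ∀ A B : Set S, MeasurableSet A → MeasurableSet B → μ (A ∪ B) ≤ max (μ A) (μ B))
    (hφ : ∀ f ∈ Bb S, (φ f : EReal) = maxitiveIntegral μ f) : MaxStable (Bb S) φ := by
  intro f hf g hg
  rw [← EReal.coe_le_coe_iff, EReal.coe_strictMono.monotone.map_max, hφ f hf, hφ g hg,
    hφ _ (Bb.sup_mem hf hg)]
  exact maxitiveIntegral_sup_le hμ hf.1 hg.1

end Converse

theorem stmt9_general {S : Type*} [MeasurableSpace S]
    (φ : (S → ℝ) → ℝ) :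
    (Monetary (Bb S) φ ∧ MaxStable (Bb S) φ) ↔
      ((conc φ (∅ : Set S) = ⊥) ∧
       (conc φ (univ : Set S) = 0) ∧
       (∀ A B : Set S, MeasurableSet A → MeasurableSet B → A ⊆ B →
          conc φ A ≤ conc φ B) ∧
       (∀ A B : Set S, MeasurableSet A → MeasurableSet B →
          conc φ (A ∪ B) ≤ max (conc φ A) (conc φ B)) ∧
       (∀ f ∈ Bb S, (φ f : EReal) = ⨆ r : ℝ, ((r : EReal) + conc φ {x | r < f x}))) := by
  constructor
  · rintro ⟨hM, hX⟩
    exact ⟨conc_empty hM, conc_univ hM, fun _ _ hA hB => conc_mono hM hA hB,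
      fun _ _ hA hB => conc_union_le hM hX hA hB,
      fun _ hf => map_eq_maxitiveIntegral_conc hM hX hf⟩
  · rintro ⟨hempty, huniv, hmono, hunion, hrep⟩
    exact ⟨monetary_of_eq_maxitiveIntegral hempty huniv hmono hrep,
      maxStable_of_eq_maxitiveIntegral hunion hrep⟩

theorem stmt9 {S : Type*} [MetricSpace S] [MeasurableSpace S] [BorelSpace S]
    (φ : (S → ℝ) → ℝ) :
    (Monetary (Bb S) φ ∧ MaxStable (Bb S) φ) ↔
      ((conc φ (∅ : Set S) = ⊥) ∧
       (conc φ (univ : Set S) = 0) ∧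
       (∀ A B : Set S, MeasurableSet A → MeasurableSet B → A ⊆ B →
          conc φ A ≤ conc φ B) ∧
       (∀ A B : Set S, MeasurableSet A → MeasurableSet B →
          conc φ (A ∪ B) ≤ max (conc φ A) (conc φ B)) ∧
       (∀ f ∈ Bb S, (φ f : EReal) = ⨆ r : ℝ, ((r : EReal) + conc φ {x | r < f x}))) :=
  stmt9_general φ
end
end

section
/- Let φ : B_b(S) → ℝ be a monetary risk measure on a metric space S, with minimal rate function I_min(x) := sup_{f ∈ C_b(S)}{ f(x) − φ(f) } and concentration function J_A := inf_{r∈ℝ} φ(r·1_{A^c}). Then for every x ∈ S, −I_min(x) = lim_{δ ↓ 0} J_{B_δ(x)}, where B_δ(x) is the open ball of radius δ around x. -/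
open MeasureTheory Set Metric Filter Topology

noncomputable section

lemma ereal_neg_iSup {ι : Sort*} (f : ι → EReal) : -(⨆ i, f i) = ⨅ i, -f i := by
  apply le_antisymm
  · exact le_iInf fun i => EReal.neg_le_neg_iff.mpr (le_iSup f i)
  · exact EReal.le_neg_of_le_neg (iSup_le fun i => EReal.le_neg_of_le_neg (iInf_le (fun i => -f i) i))

lemma bcf_mem_Bb {S : Type*} [MetricSpace S] [MeasurableSpace S] [BorelSpace S]
    (f : BoundedContinuousFunction S ℝ) : ⇑f ∈ Bb S :=
  ⟨f.continuous.measurable, ‖f‖, fun y => by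
    simpa [Real.norm_eq_abs] using f.norm_coe_le_norm y⟩

lemma indicator_mem_Bb {S : Type*} [MetricSpace S] [MeasurableSpace S] [BorelSpace S]
    (A : Set S) (hA : MeasurableSet A) (r : ℝ) :
    (A.indicator fun _ => r) ∈ Bb S := by
  refine ⟨(measurable_const).indicator hA, |r|, fun y => ?_⟩
  by_cases hy : y ∈ A <;> simp [hy, abs_nonneg]

theorem stmt10 {S : Type*} [MetricSpace S] [MeasurableSpace S] [BorelSpace S]
    (φ : (S → ℝ) → ℝ) (hmon : Monetary (Bb S) φ) (x : S) :
    -(IminE φ x) = ⨅ (δ : ℝ) (_ : 0 < δ), conc φ (Metric.ball x δ) := by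
  obtain ⟨hzero, htrans, hmono⟩ := hmon
  have key : -(IminE φ x) = ⨅ f : BoundedContinuousFunction S ℝ,
      ((φ ⇑f - f x : ℝ) : EReal) := by
    rw [IminE, ereal_neg_iSup]
    refine iInf_congr fun f => ?_
    rw [← EReal.coe_neg]
    norm_num
  rw [key]
  apply le_antisymm
  · -- LHS ≤ RHS : use Urysohn-type functions
    refine le_iInf₂ fun δ hδ => le_iInf fun r => ?_
    by_cases hr : r ≤ 0
    · -- construct F y = r * (1 - max (1 - dist x y / δ) 0)
      have hbnd : ∀ y, ‖r * (1 - max (1 - dist x y / δ) 0)‖ ≤ |r| := by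
        intro y
        rw [Real.norm_eq_abs, abs_mul]
        have h1 : 0 ≤ 1 - max (1 - dist x y / δ) 0 := by
          have : 1 - dist x y / δ ≤ 1 := by
            have hd0 : (0:ℝ) ≤ dist x y := dist_nonneg
            have := div_nonneg hd0 hδ.le
            linarith
          simp only [sub_nonneg, max_le_iff]
          exact ⟨this, zero_le_one⟩
        have h2 : 1 - max (1 - dist x y / δ) 0 ≤ 1 := by
          have := le_max_right (1 - dist x y / δ) 0
          linarith
        calc |r| * |1 - max (1 - dist x y / δ) 0| ≤ |r| * 1 := by
              apply mul_le_mul_of_nonneg_left _ (abs_nonneg r)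
              rw [abs_of_nonneg h1]; exact h2
          _ = |r| := mul_one _
      set F : BoundedContinuousFunction S ℝ :=
        BoundedContinuousFunction.ofNormedAddCommGroup
          (fun y : S => r * (1 - max (1 - dist x y / δ) 0))
          (by fun_prop) |r| hbnd with hF
      have hFx : F x = 0 := by
        show r * (1 - max (1 - dist x x / δ) 0) = 0
        simp
      have hFle : ∀ y, F y ≤ ((Metric.ball x δ)ᶜ.indicator fun _ => r) y := by
        intro y
        by_cases hy : y ∈ Metric.ball x δ
        · have : ((Metric.ball x δ)ᶜ.indicator fun _ => r) y = 0 :=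
            Set.indicator_of_notMem (by simpa using hy) _
          rw [this]
          show r * (1 - max (1 - dist x y / δ) 0) ≤ 0
          have h1 : 0 ≤ 1 - max (1 - dist x y / δ) 0 := by
            have : 1 - dist x y / δ ≤ 1 := by
              have hd0 : (0:ℝ) ≤ dist x y := dist_nonneg
              have := div_nonneg hd0 hδ.le
              linarith
            simp only [sub_nonneg, max_le_iff]
            exact ⟨this, zero_le_one⟩
          exact mul_nonpos_iff.mpr (Or.inr ⟨hr, h1⟩)
        · have hmem : y ∈ (Metric.ball x δ)ᶜ := by simpa using hy
          rw [Set.indicator_of_mem hmem]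
          show r * (1 - max (1 - dist x y / δ) 0) ≤ r
          have hd : δ ≤ dist x y := by
            rw [Metric.mem_ball, dist_comm] at hy
            linarith [not_lt.mp hy]
          have : 1 - dist x y / δ ≤ 0 := by
            rw [sub_nonpos, le_div_iff₀ hδ]
            linarith
          rw [max_eq_right this, sub_zero, mul_one]
      have hφ : φ ⇑F ≤ φ ((Metric.ball x δ)ᶜ.indicator fun _ => r) :=
        hmono _ (bcf_mem_Bb F) _
          (indicator_mem_Bb _ measurableSet_ball.compl r) hFle
      refine (iInf_le _ F).trans ?_
      rw [EReal.coe_le_coe_iff]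
      rw [hFx]
      linarith
    · -- r > 0 : use F = 0
      push_neg at hr
      refine (iInf_le _ (0 : BoundedContinuousFunction S ℝ)).trans ?_
      rw [EReal.coe_le_coe_iff]
      have h0 : φ ⇑(0 : BoundedContinuousFunction S ℝ) = 0 := by
        rw [BoundedContinuousFunction.coe_zero, hzero]
      have hge : (0:ℝ) ≤ φ ((Metric.ball x δ)ᶜ.indicator fun _ => r) := by
        rw [← hzero]
        refine hmono 0 ⟨measurable_const, 0, by simp⟩ _
          (indicator_mem_Bb _ measurableSet_ball.compl r) fun y => ?_
        by_cases hy : y ∈ (Metric.ball x δ)ᶜ <;> simp [hy, hr.le]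
      simp only [BoundedContinuousFunction.coe_zero, Pi.zero_apply, hzero]
      simpa using hge
  · -- RHS ≤ LHS
    refine le_iInf fun f => ?_
    set c : ℝ := φ ⇑f - f x with hc
    refine le_of_forall_gt_imp_ge_of_dense fun a ha => ?_
    obtain ⟨y, hy1, hy2⟩ := EReal.exists_between_coe_real ha
    set ε : ℝ := y - c with hε
    have hεpos : 0 < ε := by
      have := EReal.coe_lt_coe_iff.mp hy1
      simpa [hε] using this
    -- continuity of f at x
    obtain ⟨δ, hδ, hball⟩ : ∃ δ > 0, ∀ z, dist z x < δ → dist (f z) (f x) < ε := by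
      have := Metric.continuous_iff.mp f.continuous x ε hεpos
      exact this
    set r : ℝ := -(2 * ‖f‖) with hrdef
    set g : S → ℝ := (Metric.ball x δ)ᶜ.indicator fun _ => r with hg
    set f' : S → ℝ := ⇑f + fun _ => (ε - f x) with hf'
    have hf'Bb : f' ∈ Bb S := by
      refine ⟨f.continuous.measurable.add measurable_const, ‖f‖ + |ε - f x|, fun z => ?_⟩
      have h1 : |f z| ≤ ‖f‖ := by
        simpa [Real.norm_eq_abs] using f.norm_coe_le_norm z
      calc |f z + (ε - f x)| ≤ |f z| + |ε - f x| := abs_add_le _ _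
        _ ≤ ‖f‖ + |ε - f x| := by linarith
    have hle : ∀ z, g z ≤ f' z := by
      intro z
      by_cases hz : z ∈ Metric.ball x δ
      · have : g z = 0 := Set.indicator_of_notMem (by simpa using hz) _
        rw [this]
        have := hball z (Metric.mem_ball.mp hz)
        have : f x - f z < ε := by
          have h := abs_lt.mp (by simpa [Real.dist_eq] using this)
          linarith [h.1]
        show (0:ℝ) ≤ f z + (ε - f x)
        linarith
      · have : g z = r := Set.indicator_of_mem (by simpa using hz) _
        rw [this]
        have h1 : |f z| ≤ ‖f‖ := by
          simpa [Real.norm_eq_abs] using f.norm_coe_le_norm z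
        have h2 : |f x| ≤ ‖f‖ := by
          simpa [Real.norm_eq_abs] using f.norm_coe_le_norm x
        have := abs_le.mp h1
        have := abs_le.mp h2
        show -(2 * ‖f‖) ≤ f z + (ε - f x)
        linarith [(abs_le.mp h1).1, (abs_le.mp h2).2]
    have hφle : φ g ≤ φ ⇑f + (ε - f x) := by
      have := htrans ⇑f (bcf_mem_Bb f) (ε - f x)
      calc φ g ≤ φ f' :=
            hmono g (indicator_mem_Bb _ measurableSet_ball.compl r) f' hf'Bb hle
        _ = φ ⇑f + (ε - f x) := this
    calc (⨅ (δ' : ℝ) (_ : 0 < δ'), conc φ (Metric.ball x δ'))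
        ≤ conc φ (Metric.ball x δ) := biInf_le _ hδ
      _ ≤ ((φ g : ℝ) : EReal) := iInf_le _ r
      _ ≤ ((y : ℝ) : EReal) := by
          rw [EReal.coe_le_coe_iff]
          have : φ ⇑f + (ε - f x) = y := by rw [hε, hc]; ring
          linarith [hφle]
      _ ≤ a := hy2.le
end
end

section
/- Let φ : B_b(S) → ℝ be a monetary risk measure on a metric space S with concentration function J, minimal rate function I_min, and let I : S → [0, +∞] be lower semicontinuous. If J_A ≤ −inf_{x ∈ A} I(x) for every closed set A ⊆ S, then I_min ≥ I. If −inf_{x ∈ A} I(x) ≤ J_A for every open set A ⊆ S, then I_min ≤ I. In particular, if φ satisfies the large deviation principle with rate function I, then I = I_min. -/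
/-!
Both inequalities compare `I_min(x) = sup_f (f(x) - φ(f))` with concentration values of
neighbourhoods of `x`. If `A` is a closed neighbourhood of `x` and `r ∈ ℝ`, an Urysohn function
which vanishes at `x` and equals `min r 0` off `A` lies below `r · 1_{Aᶜ}`, so monotonicity gives
`-J_A ≤ I_min(x)`; choosing `A` inside `{I > α}` by lower semicontinuity turns the closed-set upper
bound into `α ≤ I_min(x)`. Conversely, for `f ∈ C_b(S)` and `c < f(x)` the open superlevel set
`A = {f > c}` satisfies `(-‖f‖ - c) · 1_{Aᶜ} + c ≤ f`, so translation invariance gives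
`J_A ≤ φ(f) - c`, and the open-set lower bound yields `f(x) - φ(f) ≤ I(x)`.
-/

open MeasureTheory Set Metric Filter Topology

noncomputable section

open scoped BoundedContinuousFunction

section

variable {S : Type*} [MeasurableSpace S]

lemma indicator_const_mem_Bb {A : Set S} (hA : MeasurableSet A) (r : ℝ) :
    A.indicator (fun _ => r) ∈ Bb S := by
  refine ⟨measurable_const.indicator hA, |r|, fun x => ?_⟩
  by_cases hx : x ∈ A <;> simp [hx]

lemma add_const_mem_Bb {f : S → ℝ} (hf : f ∈ Bb S) (c : ℝ) : (f + fun _ => c) ∈ Bb S := by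
  obtain ⟨hmeas, C, hC⟩ := hf
  exact ⟨hmeas.add measurable_const, C + |c|, fun x => (abs_add_le _ _).trans (by linarith [hC x])⟩

variable [TopologicalSpace S] [OpensMeasurableSpace S] {φ : (S → ℝ) → ℝ}

lemma BoundedContinuousFunction.coe_mem_Bb (f : S →ᵇ ℝ) : ⇑f ∈ Bb S :=
  ⟨f.continuous.measurable, ‖f‖, f.norm_coe_le_norm⟩

lemma le_IminE_of_mem_nhds [CompletelyRegularSpace S] (hmon : Monetary (Bb S) φ) {A : Set S}
    {x : S} (hA : A ∈ 𝓝 x) (hAm : MeasurableSet A) (r : ℝ) :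
    ((-φ (Aᶜ.indicator fun _ => r) : ℝ) : EReal) ≤ IminE φ x := by
  obtain ⟨g, hg, hgx, hg1⟩ := CompletelyRegularSpace.completely_regular_isOpen x (interior A)
    isOpen_interior (mem_interior_iff_mem_nhds.2 hA)
  set r' := min r 0
  have hbound : ∀ y, ‖r' * (g y : ℝ)‖ ≤ |r'| := fun y => by
    rw [norm_mul, Real.norm_eq_abs, Real.norm_eq_abs, abs_of_nonneg (g y).2.1]
    exact mul_le_of_le_one_right (abs_nonneg r') (g y).2.2
  let f : S →ᵇ ℝ := .ofNormedAddCommGroup (fun y => r' * (g y : ℝ))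
    (continuous_const.mul (continuous_subtype_val.comp hg)) |r'| hbound
  have hf_le : ∀ y, f y ≤ Aᶜ.indicator (fun _ => r) y := fun y => by
    by_cases hy : y ∈ A
    · simpa [f, hy] using mul_nonpos_of_nonpos_of_nonneg (min_le_right r 0) (g y).2.1
    · have hgy : g y = 1 := hg1 fun h => hy (interior_subset h)
      simp [f, hy, hgy, r']
  have hφ : φ f ≤ φ (Aᶜ.indicator fun _ => r) :=
    hmon.2.2 _ f.coe_mem_Bb _ (indicator_const_mem_Bb hAm.compl r) hf_le
  have hfx : f x = 0 := by simp [f, hgx]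
  exact le_iSup_of_le f (EReal.coe_le_coe_iff.2 (by linarith))

lemma neg_conc_le_IminE [CompletelyRegularSpace S] (hmon : Monetary (Bb S) φ) {A : Set S}
    {x : S} (hA : A ∈ 𝓝 x) (hAm : MeasurableSet A) : -conc φ A ≤ IminE φ x := by
  rw [EReal.neg_le]
  refine le_iInf fun r => EReal.neg_le.1 ?_
  exact_mod_cast le_IminE_of_mem_nhds hmon hA hAm r

lemma conc_setOf_lt_le (hmon : Monetary (Bb S) φ) (f : S →ᵇ ℝ) (c : ℝ) :
    conc φ {y | c < f y} ≤ ((φ f - c : ℝ) : EReal) := by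
  obtain ⟨-, htr, hmono⟩ := hmon
  set A := {y | c < f y}
  have hAm : MeasurableSet Aᶜ := (measurableSet_lt measurable_const f.continuous.measurable).compl
  have hle : ∀ y, (Aᶜ.indicator (fun _ => -‖f‖ - c) + fun _ => c : S → ℝ) y ≤ f y := fun y => by
    by_cases hy : y ∈ A
    · simpa [hy] using hy.le
    · simpa [hy] using f.neg_norm_le_apply y
  have hφ := hmono _ (add_const_mem_Bb (indicator_const_mem_Bb hAm _) c) _ f.coe_mem_Bb hle
  rw [htr _ (indicator_const_mem_Bb hAm _) c] at hφ
  exact (iInf_le _ (-‖f‖ - c)).trans (EReal.coe_le_coe_iff.2 (by linarith))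

theorem le_IminE_of_conc_le [CompletelyRegularSpace S] (hmon : Monetary (Bb S) φ)
    {I : S → EReal} (hlsc : LowerSemicontinuous I)
    (h : ∀ A : Set S, IsClosed A → conc φ A ≤ -(⨅ x ∈ A, I x)) (x : S) : I x ≤ IminE φ x := by
  refine le_of_forall_lt_imp_le_of_dense fun α hα => ?_
  obtain ⟨A, hA, hAc, hAI⟩ := exists_mem_nhds_isClosed_subset (hlsc x α hα)
  calc α ≤ ⨅ y ∈ A, I y := le_iInf₂ fun y hy => (hAI hy).le
    _ ≤ -conc φ A := EReal.le_neg_of_le_neg (h A hAc)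
    _ ≤ IminE φ x := neg_conc_le_IminE hmon hA hAc.measurableSet

theorem IminE_le_of_le_conc (hmon : Monetary (Bb S) φ) {I : S → EReal}
    (h : ∀ A : Set S, IsOpen A → -(⨅ x ∈ A, I x) ≤ conc φ A) (x : S) : IminE φ x ≤ I x := by
  refine iSup_le fun f => EReal.ge_of_forall_gt_iff_ge.1 fun z hz => ?_
  have hzx : z + φ f < f x := by linarith [EReal.coe_lt_coe_iff.1 hz]
  have hA : IsOpen {y | z + φ f < f y} := isOpen_lt continuous_const f.continuous
  have hconc : -(⨅ y ∈ {y | z + φ f < f y}, I y) ≤ -(z : EReal) := by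
    refine (h _ hA).trans ((conc_setOf_lt_le hmon f _).trans_eq ?_)
    rw [← EReal.coe_neg]
    congr 1
    ring
  exact (EReal.neg_le_neg_iff.1 hconc).trans (iInf₂_le x hzx)

end

theorem stmt12_general {S : Type*} [MetricSpace S] [MeasurableSpace S] [BorelSpace S]
    (φ : (S → ℝ) → ℝ) (hmon : Monetary (Bb S) φ)
    (I : S → EReal)
    (hlsc : LowerSemicontinuous I) :
    ((∀ A : Set S, IsClosed A → conc φ A ≤ -(⨅ x ∈ A, I x)) →
      ∀ x, I x ≤ IminE φ x) ∧
    ((∀ A : Set S, IsOpen A → -(⨅ x ∈ A, I x) ≤ conc φ A) →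
      ∀ x, IminE φ x ≤ I x) ∧
    ((∀ A : Set S, MeasurableSet A →
        -(⨅ x ∈ interior A, I x) ≤ conc φ A ∧
          conc φ A ≤ -(⨅ x ∈ closure A, I x)) →
      I = IminE φ) := by
  refine ⟨le_IminE_of_conc_le hmon hlsc, IminE_le_of_le_conc hmon, fun h => ?_⟩
  funext x
  refine le_antisymm (le_IminE_of_conc_le hmon hlsc (fun A hA => ?_) x)
    (IminE_le_of_le_conc hmon (fun A hA => ?_) x)
  · simpa only [hA.closure_eq] using (h A hA.measurableSet).2
  · simpa only [hA.interior_eq] using (h A hA.measurableSet).1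

theorem stmt12 {S : Type*} [MetricSpace S] [MeasurableSpace S] [BorelSpace S]
    (φ : (S → ℝ) → ℝ) (hmon : Monetary (Bb S) φ)
    (I : S → EReal) (hI0 : ∀ x, 0 ≤ I x)
    (hlsc : LowerSemicontinuous I) (hne : ∃ x, I x ≠ ⊤) :
    ((∀ A : Set S, IsClosed A → conc φ A ≤ -(⨅ x ∈ A, I x)) →
      ∀ x, I x ≤ IminE φ x) ∧
    ((∀ A : Set S, IsOpen A → -(⨅ x ∈ A, I x) ≤ conc φ A) →
      ∀ x, IminE φ x ≤ I x) ∧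
    ((∀ A : Set S, MeasurableSet A →
        -(⨅ x ∈ interior A, I x) ≤ conc φ A ∧
          conc φ A ≤ -(⨅ x ∈ closure A, I x)) →
      I = IminE φ) :=
  stmt12_general φ hmon I hlsc
end
end

section
/- Let φ : B_b(S) → ℝ be a monetary risk measure on a metric space S. If φ(f) = sup_{x∈S}{ f(x) − I(x) } for all f ∈ C_b(S), where I : S → [0,+∞] is a rate function, then φ satisfies the large deviation principle with rate function I: for every Borel set A, −inf_{x∈int(A)} I(x) ≤ J_A ≤ −inf_{x∈cl(A)} I(x), where J_A := inf_{r∈ℝ} φ(r·1_{A^c}). Moreover I = I_min, where I_min(x) = sup_{f∈C_b(S)}{f(x) − φ(f)}. -/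
open MeasureTheory Set Metric Filter Topology

noncomputable section

lemma ind_mem_Bb {S : Type*} [MetricSpace S] [MeasurableSpace S] [BorelSpace S]
    {A : Set S} (hA : MeasurableSet A) (r : ℝ) :
    Aᶜ.indicator (fun _ => r) ∈ Bb S := by
  refine ⟨measurable_const.indicator hA.compl, |r|, fun x => ?_⟩
  by_cases hx : x ∈ Aᶜ
  · simp [Set.indicator_of_mem hx, le_abs_self, abs_le_abs]
  · simp [Set.indicator_of_notMem hx]

theorem stmt13 {S : Type*} [MetricSpace S] [MeasurableSpace S] [BorelSpace S]
    (φ : (S → ℝ) → ℝ) (hmon : Monetary (Bb S) φ)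
    (I : S → EReal) (hI0 : ∀ x, 0 ≤ I x)
    (hlsc : LowerSemicontinuous I) (hne : ∃ x, I x ≠ ⊤)
    (hrep : ∀ f : BoundedContinuousFunction S ℝ,
      (φ ⇑f : EReal) = ⨆ x : S, (((f x : ℝ) : EReal) - I x)) :
    (∀ A : Set S, MeasurableSet A →
      -(⨅ x ∈ interior A, I x) ≤ conc φ A ∧
        conc φ A ≤ -(⨅ x ∈ closure A, I x)) ∧
    I = IminE φ := by
  obtain ⟨φ0, φtrans, φmono⟩ := hmon
  constructor
  · intro A hA
    constructor
    · -- lower bound: -(inf over interior) ≤ conc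
      rw [EReal.neg_le]
      refine le_iInf₂ fun x hx => ?_
      rw [← EReal.neg_le]
      refine le_iInf fun r => ?_
      -- Urysohn function: 0 at x, 1 on (interior A)ᶜ
      have hGo : IsOpen (interior A) := isOpen_interior
      obtain ⟨u, hu0, hu1, hu01⟩ :=
        exists_continuous_zero_one_of_isClosed (isClosed_singleton (x := x))
          hGo.isClosed_compl (Set.disjoint_left.mpr (by rintro a rfl; simpa using hx))
      set r' : ℝ := min r 0 with hr'
      have hr'0 : r' ≤ 0 := min_le_right _ _
      have hr'r : r' ≤ r := min_le_left _ _
      let f : BoundedContinuousFunction S ℝ :=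
        BoundedContinuousFunction.ofNormedAddCommGroup (fun z => r' * u z)
          (continuous_const.mul u.continuous) |r'| (fun z => by
            have := (hu01 z).1; have := (hu01 z).2
            rw [Real.norm_eq_abs, abs_mul]
            calc |r'| * |u z| ≤ |r'| * 1 := by
                  apply mul_le_mul_of_nonneg_left _ (abs_nonneg _)
                  rw [abs_le]; constructor <;> linarith [(hu01 z).1, (hu01 z).2]
              _ = |r'| := mul_one _)
      have hfx : f x = 0 := by
        have : u x = 0 := hu0 rfl
        simp [f, this]
      have hle : ∀ z, f z ≤ Aᶜ.indicator (fun _ => r) z := by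
        intro z
        by_cases hz : z ∈ A
        · have hz' : z ∉ Aᶜ := by simp [hz]
          rw [Set.indicator_of_notMem hz']
          have : (0:ℝ) ≤ u z := (hu01 z).1
          simpa [f] using mul_nonpos_of_nonpos_of_nonneg hr'0 this
        · have hz' : z ∈ Aᶜ := hz
          rw [Set.indicator_of_mem hz']
          have hzc : z ∈ (interior A)ᶜ := fun h => hz (interior_subset h)
          have : u z = 1 := hu1 hzc
          simp only [f, BoundedContinuousFunction.coe_ofNormedAddCommGroup]
          rw [this, mul_one]; exact hr'r
      have h1 : φ ⇑f ≤ φ (Aᶜ.indicator fun _ => r) :=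
        φmono _ (bcf_mem_Bb f) _ (ind_mem_Bb hA r) hle
      have h2 : -I x ≤ (φ ⇑f : EReal) := by
        rw [hrep f]
        refine le_trans ?_ (le_iSup _ x)
        rw [hfx, EReal.coe_zero, sub_eq_add_neg, zero_add]
      exact h2.trans (by exact_mod_cast h1)
    · -- upper bound: conc ≤ -(inf over closure)
      have hconc0 : conc φ A ≤ 0 := by
        refine (iInf_le _ (0:ℝ)).trans ?_
        have : (Aᶜ.indicator fun _ => (0:ℝ)) = 0 := by
          funext z; by_cases hz : z ∈ Aᶜ <;> simp [hz]
        rw [this, φ0]; rfl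
      refine EReal.le_neg_of_le_neg ?_
      rw [← EReal.ge_of_forall_gt_iff_ge]
      intro c hc
      rcases le_or_gt c 0 with hc0 | hc0
      · calc (c : EReal) ≤ (0 : EReal) := by exact_mod_cast hc0
          _ ≤ -conc φ A := by
            rw [← neg_zero]; exact EReal.neg_le_neg_iff.mpr hconc0
      · -- main case : 0 < c < inf over closure
        refine EReal.le_neg_of_le_neg ?_
        set F := closure A
        set K := {z : S | I z ≤ (c : EReal)} with hK
        have hKclosed : IsClosed K := hlsc.isClosed_preimage (c : EReal)
        have hdisj : Disjoint F K := by
          rw [Set.disjoint_left]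
          intro z hzF hzK
          have : (c : EReal) < I z := lt_of_lt_of_le hc (iInf₂_le z hzF)
          exact absurd hzK (not_le.mpr this)
        obtain ⟨u, hu0, hu1, hu01⟩ :=
          exists_continuous_zero_one_of_isClosed isClosed_closure hKclosed hdisj
        let f : BoundedContinuousFunction S ℝ :=
          BoundedContinuousFunction.ofNormedAddCommGroup (fun z => -c * u z)
            (continuous_const.mul u.continuous) c (fun z => by
              rw [Real.norm_eq_abs, abs_mul]
              calc |(-c)| * |u z| ≤ |(-c)| * 1 := by
                    apply mul_le_mul_of_nonneg_left _ (abs_nonneg _)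
                    rw [abs_le]; constructor <;> linarith [(hu01 z).1, (hu01 z).2]
                _ = c := by rw [mul_one, abs_neg, abs_of_pos hc0])
        have hle : ∀ z, Aᶜ.indicator (fun _ => (-c : ℝ)) z ≤ f z := by
          intro z
          by_cases hz : z ∈ A
          · have hz' : z ∉ Aᶜ := by simp [hz]
            rw [Set.indicator_of_notMem hz']
            have huz : u z = 0 := hu0 (subset_closure hz)
            simp [f, huz]
          · have hz' : z ∈ Aᶜ := hz
            rw [Set.indicator_of_mem hz']
            simp only [f, BoundedContinuousFunction.coe_ofNormedAddCommGroup]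
            nlinarith [(hu01 z).1, (hu01 z).2]
        have h1 : φ (Aᶜ.indicator fun _ => (-c : ℝ)) ≤ φ ⇑f :=
          φmono _ (ind_mem_Bb hA (-c)) _ (bcf_mem_Bb f) hle
        have h2 : (φ ⇑f : EReal) ≤ ((-c : ℝ) : EReal) := by
          rw [hrep f]
          refine iSup_le fun z => ?_
          by_cases hzK : z ∈ K
          · have huz : u z = 1 := hu1 hzK
            have hfz : f z = -c := by simp [f, huz]
            rw [hfz]
            calc ((-c : ℝ) : EReal) - I z ≤ ((-c : ℝ) : EReal) - 0 :=
                  EReal.sub_le_sub le_rfl (hI0 z)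
              _ = ((-c : ℝ) : EReal) := by simp
          · have hIz : (c : EReal) ≤ I z := (not_le.mp hzK).le
            have hfz : f z ≤ 0 := by
              simp only [f, BoundedContinuousFunction.coe_ofNormedAddCommGroup]
              nlinarith [(hu01 z).1]
            calc ((f z : ℝ) : EReal) - I z ≤ ((0:ℝ) : EReal) - (c : EReal) :=
                  EReal.sub_le_sub (by exact_mod_cast hfz) hIz
              _ = ((-c : ℝ) : EReal) := by
                  rw [← EReal.coe_sub]; norm_num
        calc conc φ A ≤ (φ (Aᶜ.indicator fun _ => (-c : ℝ)) : EReal) := iInf_le _ (-c)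
          _ ≤ (φ ⇑f : EReal) := by exact_mod_cast h1
          _ ≤ ((-c : ℝ) : EReal) := h2
          _ = -(c : EReal) := by rw [EReal.coe_neg]
  · -- I = IminE φ
    funext x
    apply le_antisymm
    · -- I x ≤ IminE φ x
      rw [← EReal.ge_of_forall_gt_iff_ge]
      intro c hc
      -- lsc: there is an open U ∋ x with I > c on U
      obtain ⟨U, hxU, hUo, hU⟩ : ∃ U : Set S, x ∈ U ∧ IsOpen U ∧ ∀ z ∈ U, (c : EReal) < I z := by
        have := hlsc x (c : EReal) hc
        rcases _root_.eventually_nhds_iff.mp this with ⟨U, hU, hUo, hxU⟩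
        exact ⟨U, hxU, hUo, hU⟩
      obtain ⟨u, hu0, hu1, hu01⟩ :=
        exists_continuous_zero_one_of_isClosed hUo.isClosed_compl
          (isClosed_singleton (x := x)) (Set.disjoint_right.mpr (by rintro a rfl; simpa using hxU))
      let f : BoundedContinuousFunction S ℝ :=
        BoundedContinuousFunction.ofNormedAddCommGroup (fun z => c * u z)
          (continuous_const.mul u.continuous) |c| (fun z => by
            rw [Real.norm_eq_abs, abs_mul]
            calc |c| * |u z| ≤ |c| * 1 := by
                  apply mul_le_mul_of_nonneg_left _ (abs_nonneg _)
                  rw [abs_le]; constructor <;> linarith [(hu01 z).1, (hu01 z).2]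
              _ = |c| := mul_one _)
      have hfx : f x = c := by
        have : u x = 1 := hu1 rfl
        simp [f, this]
      have hφf : φ ⇑f ≤ 0 := by
        have h2 : (φ ⇑f : EReal) ≤ ((0:ℝ) : EReal) := by
          rw [hrep f]
          refine iSup_le fun z => ?_
          by_cases hz : z ∈ U
          · have hIz : (c : EReal) < I z := hU z hz
            have hfz : f z ≤ max c 0 := by
              simp only [f, BoundedContinuousFunction.coe_ofNormedAddCommGroup]
              rcases le_or_gt c 0 with h | h
              · have : c * u z ≤ 0 := mul_nonpos_of_nonpos_of_nonneg h (hu01 z).1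
                exact this.trans (le_max_right _ _)
              · have : c * u z ≤ c * 1 := mul_le_mul_of_nonneg_left (hu01 z).2 h.le
                rw [mul_one] at this
                exact this.trans (le_max_left _ _)
            have hIz' : ((max c 0 : ℝ) : EReal) ≤ I z := by
              rcases le_or_gt c 0 with h | h
              · have : max c 0 = 0 := max_eq_right h
                rw [this]; exact_mod_cast hI0 z
              · have : max c 0 = c := max_eq_left h.le
                rw [this]; exact hIz.le
            calc ((f z : ℝ) : EReal) - I z
                ≤ ((max c 0 : ℝ) : EReal) - ((max c 0 : ℝ) : EReal) :=
                  EReal.sub_le_sub (by exact_mod_cast hfz) hIz'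
              _ = ((0:ℝ) : EReal) := by rw [← EReal.coe_sub]; norm_num
          · have huz : u z = 0 := hu0 hz
            have hfz : f z = 0 := by simp [f, huz]
            rw [hfz]
            calc ((0:ℝ) : EReal) - I z ≤ ((0:ℝ) : EReal) - 0 :=
                  EReal.sub_le_sub le_rfl (hI0 z)
              _ = ((0:ℝ) : EReal) := by simp
        exact_mod_cast h2
      calc (c : EReal) ≤ ((f x - φ ⇑f : ℝ) : EReal) := by
            rw [hfx]; exact_mod_cast (by linarith : c ≤ c - φ ⇑f)
        _ ≤ IminE φ x := le_iSup (fun g : BoundedContinuousFunction S ℝ => ((g x - φ ⇑g : ℝ) : EReal)) f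
    · -- IminE φ x ≤ I x
      show (⨆ f : BoundedContinuousFunction S ℝ, ((f x - φ ⇑f : ℝ) : EReal)) ≤ I x
      refine iSup_le fun f => ?_
      by_cases hIx : I x = ⊤
      · rw [hIx]; exact le_top
      · have hIbot : I x ≠ ⊥ := ne_of_gt (lt_of_lt_of_le (by norm_num : (⊥ : EReal) < 0) (hI0 x))
        obtain ⟨a, ha⟩ : ∃ a : ℝ, I x = (a : EReal) :=
          ⟨(I x).toReal, (EReal.coe_toReal hIx hIbot).symm⟩
        have h1 : ((f x : ℝ) : EReal) - (a : EReal) ≤ (φ ⇑f : EReal) := by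
          rw [hrep f]
          refine le_trans ?_ (le_iSup _ x)
          rw [← ha]
        have h2 : f x - a ≤ φ ⇑f := by
          rw [← EReal.coe_sub] at h1
          exact_mod_cast h1
        rw [ha]
        exact_mod_cast (by linarith : f x - φ ⇑f ≤ a)
end
end

section
/- Let φ : B_b(S) → ℝ be a locally max-stable monetary risk measure on a metric space S, with minimal rate function I_min and concentration function J. Then for every compact set K ⊆ S: (i) I_K(x) ≥ I_min(x) for all x ∈ K, where I_K(x) := sup_{f∈C(K)} { f(x) − inf_{r∈ℝ} φ(f·1_K + r·1_{K^c}) }; and (ii) I_min(x) ≥ −J_{K^c} for all x ∉ K. -/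
open MeasureTheory Set Metric Filter Topology

noncomputable section

/-- The class `C^K(S)` of functions of the form `f·1_K + r·1_{Kᶜ}` with `f`
continuous on `K` and `r ∈ ℝ`. -/
def CK {S : Type*} [TopologicalSpace S] (K : Set S) : Set (S → ℝ) :=
  {h : S → ℝ | ∃ (f : S → ℝ) (r : ℝ), ContinuousOn f K ∧
    h = K.indicator f + Kᶜ.indicator fun _ => r}

theorem stmt18 {S : Type*} [MetricSpace S] [MeasurableSpace S] [BorelSpace S]
    (φ : (S → ℝ) → ℝ) (hmon : Monetary (Bb S) φ)
    (hloc : ∀ K : Set S, IsCompact K → MaxStable (CK K) φ)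
    (K : Set S) (hK : IsCompact K) :
    (∀ x ∈ K, IminE φ x ≤
      ⨆ f : {f : S → ℝ // ContinuousOn f K},
        (((f : S → ℝ) x : ℝ) : EReal) -
          ⨅ r : ℝ,
            (φ (K.indicator (f : S → ℝ) + Kᶜ.indicator fun _ => r) : EReal)) ∧
    (∀ x, x ∉ K → -(conc φ Kᶜ) ≤ IminE φ x) := by
  obtain ⟨hnorm, htrans, hmono⟩ := hmon
  have hKm : MeasurableSet K := hK.isClosed.measurableSet
  constructor
  · -- Part (i)
    intro x hx
    refine iSup_le fun g => ?_
    have hgBb : ⇑g ∈ Bb S := ⟨g.continuous.measurable, ‖g‖, fun y => by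
      simpa using g.norm_coe_le_norm y⟩
    set h : S → ℝ := K.indicator ⇑g + Kᶜ.indicator fun _ => (-‖g‖) with hh
    have hhBb : h ∈ Bb S := by
      refine ⟨(g.continuous.measurable.indicator hKm).add
        (measurable_const.indicator hKm.compl), ‖g‖ + ‖g‖, fun y => ?_⟩
      by_cases hy : y ∈ K
      · simp only [hh, Pi.add_apply, Set.indicator_of_mem hy,
          Set.indicator_of_notMem (by simpa using hy : y ∉ Kᶜ)]
        have := g.norm_coe_le_norm y
        rw [Real.norm_eq_abs] at this
        have h0 : (0:ℝ) ≤ ‖g‖ := norm_nonneg _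
        rw [add_zero]
        linarith [abs_nonneg (g y)]
      · simp only [hh, Pi.add_apply, Set.indicator_of_notMem hy,
          Set.indicator_of_mem (by simpa using hy : y ∈ Kᶜ)]
        have h0 : (0:ℝ) ≤ ‖g‖ := norm_nonneg _
        rw [zero_add, abs_neg, abs_of_nonneg h0]
        linarith
    have hle : ∀ y, h y ≤ g y := by
      intro y
      by_cases hy : y ∈ K
      · simp [hh, Set.indicator_of_mem hy,
          Set.indicator_of_notMem (by simpa using hy : y ∉ Kᶜ)]
      · simp only [hh, Pi.add_apply, Set.indicator_of_notMem hy,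
          Set.indicator_of_mem (by simpa using hy : y ∈ Kᶜ), zero_add]
        have := g.norm_coe_le_norm y
        rw [Real.norm_eq_abs, abs_le] at this
        linarith [this.1]
    have hφ : φ h ≤ φ ⇑g := hmono h hhBb ⇑g hgBb hle
    refine le_trans ?_ (le_iSup _ (⟨⇑g, g.continuous.continuousOn⟩ :
      {f : S → ℝ // ContinuousOn f K}))
    have hinf : (⨅ r : ℝ, (φ (K.indicator ⇑g + Kᶜ.indicator fun _ => r) : EReal))
        ≤ (φ ⇑g : EReal) := by
      refine le_trans (iInf_le _ (-‖g‖)) ?_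
      exact_mod_cast hφ
    calc ((g x - φ ⇑g : ℝ) : EReal) = (g x : EReal) - (φ ⇑g : EReal) := by
          rw [← EReal.coe_sub]
      _ ≤ (g x : EReal) - ⨅ r : ℝ,
            (φ (K.indicator ⇑g + Kᶜ.indicator fun _ => r) : EReal) :=
          EReal.sub_le_sub le_rfl hinf
  · -- Part (ii)
    intro x hx
    rw [EReal.neg_le]
    unfold conc
    rw [compl_compl]
    refine le_iInf fun r => ?_
    rw [← EReal.neg_le]
    have hindBb : K.indicator (fun _ => r) ∈ Bb S :=
      ⟨measurable_const.indicator hKm, |r|, fun y => by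
        by_cases hy : y ∈ K
        · simp [Set.indicator_of_mem hy, le_abs_self, abs_le_abs]
        · simp [Set.indicator_of_notMem hy, abs_nonneg]⟩
    rcases K.eq_empty_or_nonempty with hKe | hKne
    · -- K empty
      subst hKe
      have he : (∅ : Set S).indicator (fun _ => r) = (0 : S → ℝ) := by funext y; simp
      rw [he, hnorm]
      have h0 : ((0:ℝ) : EReal) ≤ IminE φ x := by
        refine le_trans ?_ (le_iSup _ (0 : BoundedContinuousFunction S ℝ))
        simp [hnorm]
      simpa using h0
    · have hd : 0 < infDist x K := by
        rw [← hK.isClosed.notMem_iff_infDist_pos hKne]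
        exact hx
      set d := infDist x K
      set r' : ℝ := min r 0 with hr'
      have hr'0 : r' ≤ 0 := min_le_right _ _
      have hr'r : r' ≤ r := min_le_left _ _
      have hcont : Continuous fun y => r' * min 1 (dist y x / d) :=
        continuous_const.mul (continuous_const.min
          ((continuous_id.dist continuous_const).div_const d))
      have hbnd : ∀ y, |r' * min 1 (dist y x / d)| ≤ |r'| := by
        intro y
        rw [abs_mul]
        have hm0 : (0:ℝ) ≤ min 1 (dist y x / d) :=
          le_min zero_le_one (div_nonneg dist_nonneg hd.le)
        have hm1 : min 1 (dist y x / d) ≤ 1 := min_le_left _ _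
        calc |r'| * |min 1 (dist y x / d)| ≤ |r'| * 1 := by
              rw [abs_of_nonneg hm0]
              exact mul_le_mul_of_nonneg_left hm1 (abs_nonneg _)
          _ = |r'| := mul_one _
      set f : BoundedContinuousFunction S ℝ :=
        BoundedContinuousFunction.ofNormedAddCommGroup
          (fun y => r' * min 1 (dist y x / d)) hcont |r'| (fun y => by
            rw [Real.norm_eq_abs]; exact hbnd y) with hf
      have hfx : f x = 0 := by
        show r' * min 1 (dist x x / d) = 0
        simp
      have hfle : ∀ y, f y ≤ K.indicator (fun _ => r) y := by
        intro y
        have hfy : f y = r' * min 1 (dist y x / d) := rfl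
        by_cases hy : y ∈ K
        · rw [Set.indicator_of_mem hy, hfy]
          have hdy : d ≤ dist y x := by
            rw [dist_comm]; exact infDist_le_dist_of_mem hy
          have : (1:ℝ) ≤ dist y x / d := (one_le_div hd).mpr hdy
          rw [min_eq_left this, mul_one]
          exact hr'r
        · rw [Set.indicator_of_notMem hy, hfy]
          exact mul_nonpos_of_nonpos_of_nonneg hr'0
            (le_min zero_le_one (div_nonneg dist_nonneg hd.le))
      have hfBb : ⇑f ∈ Bb S := ⟨f.continuous.measurable, |r'|, fun y => hbnd y⟩
      have hφf : φ ⇑f ≤ φ (K.indicator fun _ => r) :=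
        hmono ⇑f hfBb _ hindBb hfle
      refine le_trans ?_ (le_iSup _ f)
      rw [← EReal.coe_neg, EReal.coe_le_coe_iff, hfx]
      linarith
end
end
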